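/- arXiv:1507.03322 — 9 statements merged into one kernel-verified Lean document; each statement's English description precedes it below -/
import Mathlib

section
/- Consider the linear ODE system dX_i/dt = i θ_i X_i + Σ_{j : {i,j}∈E} (X_j − X_i) for i ∈ V, where G = (V,E) is a finite undirected graph, θ_i ∈ ℝ, and X_i(t) ∈ ℂ. Then the function f(t) = max_{i∈V} |X_i(t)|² is non-increasing in t. -/
open Filter

open Set Topology in
private lemma freq_of_eventually_exists_aux {α ι : Type*} [Fintype ι] {l : Filter α} [l.NeBot]
    {p : ι → α → Prop} (h : ∀ᶠ x in l, ∃ i, p i x) : ∃ i, ∃ᶠ x in l, p i x := by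
  by_contra hc
  push_neg at hc
  have h2 : ∀ᶠ x in l, ∀ i, ¬ p i x := eventually_all.2 hc
  rcases (h.and h2).exists with ⟨x, ⟨i, hi⟩, hall⟩
  exact hall i hi

private lemma hasDerivAt_norm_sq_aux {f : ℝ → ℂ} {f' : ℂ} {t : ℝ} (hf : HasDerivAt f f' t) :
    HasDerivAt (fun s => ‖f s‖ ^ 2) (2 * ((starRingEnd ℂ) (f t) * f').re) t := by
  have hre : HasDerivAt (fun s => (f s).re) f'.re t := by
    simpa [Function.comp_def] using (Complex.reCLM.hasFDerivAt.comp t hf.hasFDerivAt).hasDerivAt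
  have him : HasDerivAt (fun s => (f s).im) f'.im t := by
    simpa [Function.comp_def] using (Complex.imCLM.hasFDerivAt.comp t hf.hasFDerivAt).hasDerivAt
  have h : HasDerivAt (fun s => (f s).re ^ 2 + (f s).im ^ 2)
      (2 * (f t).re ^ 1 * f'.re + 2 * (f t).im ^ 1 * f'.im) t :=
    (hre.pow 2).add (him.pow 2)
  have heq : (fun s => ‖f s‖ ^ 2) = fun s => (f s).re ^ 2 + (f s).im ^ 2 := by
    funext s
    rw [Complex.sq_norm, Complex.normSq_apply]
    ring
  rw [heq]
  convert h using 1
  simp [Complex.mul_re]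
  ring

private lemma key_sign_aux {N : ℕ} (G : SimpleGraph (Fin N)) [DecidableRel G.Adj]
    (θ : Fin N → ℝ) (z : Fin N → ℂ) (i : Fin N) (hmax : ∀ j, ‖z j‖ ≤ ‖z i‖) :
    2 * ((starRingEnd ℂ) (z i) *
      (Complex.I * (θ i : ℂ) * z i + ∑ j ∈ G.neighborFinset i, (z j - z i))).re ≤ 0 := by
  have h1 : ((starRingEnd ℂ) (z i) * (Complex.I * (θ i : ℂ) * z i)).re = 0 := by
    have : (starRingEnd ℂ) (z i) * (Complex.I * (θ i : ℂ) * z i)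
        = Complex.I * (θ i : ℂ) * (z i * (starRingEnd ℂ) (z i)) := by ring
    rw [this, Complex.mul_conj]
    simp [Complex.mul_re]
  have h2 : ∀ j, ((starRingEnd ℂ) (z i) * (z j - z i)).re ≤ 0 := by
    intro j
    have hle : ((starRingEnd ℂ) (z i) * z j).re ≤ ‖z i‖ * ‖z j‖ := by
      calc ((starRingEnd ℂ) (z i) * z j).re ≤ ‖(starRingEnd ℂ) (z i) * z j‖ :=
            Complex.re_le_norm _
        _ = ‖z i‖ * ‖z j‖ := by
            rw [norm_mul, Complex.norm_conj]
    have hsq : ((starRingEnd ℂ) (z i) * z i).re = ‖z i‖ ^ 2 := by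
      rw [mul_comm, Complex.mul_conj]
      simp [Complex.normSq_eq_norm_sq, ← Complex.ofReal_pow]
    rw [mul_sub, Complex.sub_re, hsq]
    have : ‖z i‖ * ‖z j‖ ≤ ‖z i‖ ^ 2 := by
      rw [sq]
      exact mul_le_mul_of_nonneg_left (hmax j) (norm_nonneg _)
    linarith
  rw [mul_add, Complex.add_re, h1, Finset.mul_sum, Complex.re_sum, zero_add]
  have hsum : ∑ j ∈ G.neighborFinset i, ((starRingEnd ℂ) (z i) * (z j - z i)).re ≤ 0 :=
    Finset.sum_nonpos fun j _ => h2 j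
  linarith

open Set Topology in
/-- Along `dX_i/dt = iθ_i X_i + Σ_{j∼i}(X_j − X_i)`, the function
`f(t) = max_i |X_i(t)|²` is non-increasing. -/
theorem maxModSq_antitone {N : ℕ} (hN : 0 < N) (G : SimpleGraph (Fin N))
    [DecidableRel G.Adj] (θ : Fin N → ℝ) (X : ℝ → Fin N → ℂ)
    (hX : ∀ i t, HasDerivAt (fun s => X s i)
      (Complex.I * (θ i : ℂ) * X t i + ∑ j ∈ G.neighborFinset i, (X t j - X t i)) t) :
    AntitoneOn (fun t => ⨆ i, ‖X t i‖ ^ 2) (Set.Ici (0 : ℝ)) := by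
  haveI : Nonempty (Fin N) := ⟨⟨0, hN⟩⟩
  set g : Fin N → ℝ → ℝ := fun i t => ‖X t i‖ ^ 2 with hg
  set D : Fin N → ℝ → ℝ := fun i t => 2 * ((starRingEnd ℂ) (X t i) *
    (Complex.I * (θ i : ℂ) * X t i + ∑ j ∈ G.neighborFinset i, (X t j - X t i))).re with hDdef
  have hderiv : ∀ i t, HasDerivAt (g i) (D i t) t := fun i t =>
    hasDerivAt_norm_sq_aux (hX i t)
  have hD : ∀ (t : ℝ) (i : Fin N), (∀ j, g j t ≤ g i t) → D i t ≤ 0 := by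
    intro t i h
    refine key_sign_aux G θ (X t) i fun j => ?_
    have hj := h j
    simp only [hg] at hj
    nlinarith [norm_nonneg (X t j), norm_nonneg (X t i)]
  set F : ℝ → ℝ := fun t => ⨆ i, ‖X t i‖ ^ 2 with hF
  have hFsup : ∀ t, F t = Finset.univ.sup' Finset.univ_nonempty (fun i => g i t) := by
    intro t
    simp only [hF, hg]
    exact (Finset.sup'_univ_eq_ciSup _).symm
  have hgcont : ∀ i, Continuous (g i) :=
    fun i => continuous_iff_continuousAt.2 fun t => (hderiv i t).continuousAt
  have hFcont : Continuous F := by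
    have : Continuous fun t => Finset.univ.sup' Finset.univ_nonempty (fun i => g i t) :=
      continuous_iff_continuousAt.2 fun t =>
        ContinuousAt.finset_sup'_apply Finset.univ_nonempty
          (fun i _ => (hgcont i).continuousAt)
    exact (funext hFsup : F = _) ▸ this
  have hF_ge : ∀ t i, g i t ≤ F t := by
    intro t i
    rw [hFsup t]
    exact Finset.le_sup' (fun k => g k t) (Finset.mem_univ i)
  have hF_ex : ∀ t, ∃ i, F t = g i t := by
    intro t
    rcases Finset.exists_mem_eq_sup' Finset.univ_nonempty (fun i => g i t) with ⟨i, _, hi⟩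
    exact ⟨i, (hFsup t).trans hi⟩
  have hDini : ∀ (x : ℝ) (r : ℝ), 0 < r → ∃ᶠ z in 𝓝[>] x, slope F x z < r := by
    intro x r hr
    obtain ⟨j, hj⟩ := freq_of_eventually_exists_aux (l := 𝓝[>] x)
      (p := fun i z => g i z = F z)
      (Eventually.of_forall fun z => (hF_ex z).imp fun i h => h.symm)
    have hjx : g j x = F x := by
      have h1 : Tendsto (g j) (𝓝[>] x) (𝓝 (g j x)) :=
        ((hgcont j).tendsto x).mono_left nhdsWithin_le_nhds
      have h2 : Tendsto F (𝓝[>] x) (𝓝 (F x)) :=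
        (hFcont.tendsto x).mono_left nhdsWithin_le_nhds
      exact tendsto_nhds_unique_of_frequently_eq h1 h2 hj
    have hDj : D j x ≤ 0 := hD x j fun k => (hF_ge x k).trans_eq hjx.symm
    have hslope : Tendsto (slope (g j) x) (𝓝[>] x) (𝓝 (D j x)) :=
      (hasDerivAt_iff_tendsto_slope.1 (hderiv j x)).mono_left
        (nhdsWithin_mono x fun z hz => ne_of_gt hz)
    have hev : ∀ᶠ z in 𝓝[>] x, slope (g j) x z < r :=
      hslope.eventually_lt_const (lt_of_le_of_lt hDj hr)
    refine (hj.and_eventually hev).mono ?_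
    rintro z ⟨hz1, hz2⟩
    rwa [slope_def_field, ← hz1, ← hjx, ← slope_def_field]
  intro s hs t ht hst
  have key := image_le_of_liminf_slope_right_le_deriv_boundary (f := F) (a := s) (b := t)
    (B := fun _ => F s) (B' := fun _ => 0) hFcont.continuousOn le_rfl continuousOn_const
    (fun x _ => hasDerivWithinAt_const x _ (F s))
    (fun x _ r hr => hDini x r hr)
  exact key ⟨hst, le_rfl⟩
end

section
/- Consider the linear ODE system dX_i/dt = i θ_i X_i + Σ_{j : {i,j}∈E} (X_j − X_i) over a finite connected undirected graph G = (V,E) with N ≥ 2 nodes, where θ_i ∈ ℝ. If there exist at least two indices i, j with θ_i ≠ θ_j, then every solution satisfies lim_{t→∞} X_i(t) = 0 for all i ∈ V. -/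
open Filter

open scoped NormedSpace Nat

namespace DecoherenceAux

open NormedSpace

/-- The linear operator of the ODE system. -/
noncomputable def decoOp {N : ℕ} (G : SimpleGraph (Fin N)) [DecidableRel G.Adj]
    (θ : Fin N → ℝ) : (Fin N → ℂ) →ₗ[ℂ] (Fin N → ℂ) where
  toFun v := fun i => Complex.I * (θ i : ℂ) * v i + ∑ j ∈ G.neighborFinset i, (v j - v i)
  map_add' v w := by
    funext i
    simp only [Pi.add_apply]
    have h : ∀ j ∈ G.neighborFinset i,
        (v j + w j) - (v i + w i) = (v j - v i) + (w j - w i) := by intros; ring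
    rw [Finset.sum_congr rfl h, Finset.sum_add_distrib]
    ring
  map_smul' c v := by
    funext i
    simp only [Pi.smul_apply, smul_eq_mul, RingHom.id_apply]
    have h : ∀ j ∈ G.neighborFinset i,
        (c * v j) - (c * v i) = c * (v j - v i) := by intros; ring
    rw [Finset.sum_congr rfl h, ← Finset.mul_sum]
    ring

/-- Double sums over neighborhoods can be symmetrized. -/
lemma sum_nbr_comm {N : ℕ} (G : SimpleGraph (Fin N)) [DecidableRel G.Adj]
    (F : Fin N → Fin N → ℝ) :
    ∑ i, ∑ j ∈ G.neighborFinset i, F i j = ∑ i, ∑ j ∈ G.neighborFinset i, F j i := by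
  refine Finset.sum_comm' ?_
  intro x y
  simp only [Finset.mem_univ, true_and, and_true, SimpleGraph.mem_neighborFinset]
  exact ⟨fun h => h.symm, fun h => h.symm⟩

/-- Any eigenvalue of the operator has negative real part. -/
lemma eig_re_neg {N : ℕ} (G : SimpleGraph (Fin N)) [DecidableRel G.Adj] (hG : G.Connected)
    (θ : Fin N → ℝ) (hθ : ∃ i j, θ i ≠ θ j) {μ : ℂ} {v : Fin N → ℂ} (hv : v ≠ 0)
    (heig : decoOp G θ v = μ • v) : μ.re < 0 := by
  classical
  set S : ℝ := ∑ i, Complex.normSq (v i) with hS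
  have hvk : ∃ k, v k ≠ 0 := by
    by_contra h
    push_neg at h
    exact hv (funext fun i => h i)
  obtain ⟨k0, hk0⟩ := hvk
  have hSpos : 0 < S := by
    refine Finset.sum_pos' (fun i _ => Complex.normSq_nonneg _) ⟨k0, Finset.mem_univ _, ?_⟩
    exact Complex.normSq_pos.2 hk0
  set D : ℝ := ∑ i, ∑ j ∈ G.neighborFinset i, Complex.normSq (v j - v i) with hD
  have hDnonneg : 0 ≤ D :=
    Finset.sum_nonneg fun i _ => Finset.sum_nonneg fun j _ => Complex.normSq_nonneg _
  -- key identity : 2 * (μ.re * S) = -D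
  have hkey : 2 * (μ.re * S) = -D := by
    have hterm : ∀ i, ((starRingEnd ℂ) (v i) * (decoOp G θ v i)).re
        = ∑ j ∈ G.neighborFinset i, ((starRingEnd ℂ) (v i) * (v j - v i)).re := by
      intro i
      have : (decoOp G θ v) i
          = Complex.I * (θ i : ℂ) * v i + ∑ j ∈ G.neighborFinset i, (v j - v i) := rfl
      rw [this, mul_add, Complex.add_re, Finset.mul_sum, Complex.re_sum]
      have h0 : ((starRingEnd ℂ) (v i) * (Complex.I * (θ i : ℂ) * v i)).re = 0 := by
        simp only [Complex.mul_re, Complex.mul_im, Complex.conj_re, Complex.conj_im,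
          Complex.I_re, Complex.I_im, Complex.ofReal_re, Complex.ofReal_im]
        ring
      rw [h0, zero_add]
    have hterm' : ∀ i, ((starRingEnd ℂ) (v i) * (decoOp G θ v i)).re
        = μ.re * Complex.normSq (v i) := by
      intro i
      rw [heig]
      have : (μ • v) i = μ * v i := rfl
      rw [this]
      simp only [Complex.mul_re, Complex.mul_im, Complex.conj_re, Complex.conj_im,
        Complex.normSq_apply]
      ring
    have e1 : μ.re * S = ∑ i, ∑ j ∈ G.neighborFinset i,
        ((starRingEnd ℂ) (v i) * (v j - v i)).re := by
      rw [hS, Finset.mul_sum]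
      rw [← Finset.sum_congr rfl fun i _ => hterm i]
      exact Finset.sum_congr rfl fun i _ => (hterm' i).symm
    have e2 : ∀ a b : ℂ, ((starRingEnd ℂ) a * (b - a)).re + ((starRingEnd ℂ) b * (a - b)).re
        = -Complex.normSq (b - a) := by
      intro a b
      simp only [Complex.mul_re, Complex.mul_im, Complex.conj_re, Complex.conj_im,
        Complex.sub_re, Complex.sub_im, Complex.normSq_apply]
      ring
    have e1' : μ.re * S = ∑ i, ∑ j ∈ G.neighborFinset i,
        ((starRingEnd ℂ) (v j) * (v i - v j)).re :=
      e1.trans (sum_nbr_comm G (fun i j => ((starRingEnd ℂ) (v i) * (v j - v i)).re))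
    have e3 : 2 * (μ.re * S) = ∑ i, ∑ j ∈ G.neighborFinset i,
        (((starRingEnd ℂ) (v i) * (v j - v i)).re + ((starRingEnd ℂ) (v j) * (v i - v j)).re) := by
      calc 2 * (μ.re * S) = (μ.re * S) + (μ.re * S) := two_mul _
        _ = (∑ i, ∑ j ∈ G.neighborFinset i, ((starRingEnd ℂ) (v i) * (v j - v i)).re)
            + (∑ i, ∑ j ∈ G.neighborFinset i, ((starRingEnd ℂ) (v j) * (v i - v j)).re) :=
          congrArg₂ (· + ·) e1 e1'
        _ = _ := by
          rw [← Finset.sum_add_distrib]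
          exact Finset.sum_congr rfl fun i _ => (Finset.sum_add_distrib).symm
    rw [e3, hD, ← Finset.sum_neg_distrib]
    refine Finset.sum_congr rfl fun i _ => ?_
    rw [← Finset.sum_neg_distrib]
    exact Finset.sum_congr rfl fun j _ => e2 (v i) (v j)
  have hre_nonpos : μ.re ≤ 0 := by
    nlinarith
  rcases lt_or_eq_of_le hre_nonpos with h | h
  · exact h
  -- now μ.re = 0, derive a contradiction
  exfalso
  have hD0 : D = 0 := by nlinarith
  have hedge : ∀ a b : Fin N, G.Adj a b → v a = v b := by
    intro a b hab
    have hsum0 : ∀ i ∈ (Finset.univ : Finset (Fin N)),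
        ∑ j ∈ G.neighborFinset i, Complex.normSq (v j - v i) = 0 := by
      intro i _
      have := (Finset.sum_eq_zero_iff_of_nonneg
        (fun i (_ : i ∈ Finset.univ) => Finset.sum_nonneg
          fun j _ => Complex.normSq_nonneg (v j - v i))).1 hD0.symm.symm
      exact this i (Finset.mem_univ i)
    have h2 := (Finset.sum_eq_zero_iff_of_nonneg
      (fun j (_ : j ∈ G.neighborFinset a) => Complex.normSq_nonneg (v j - v a))).1
      (hsum0 a (Finset.mem_univ a)) b ((SimpleGraph.mem_neighborFinset G a b).2 hab)
    have := Complex.normSq_eq_zero.1 h2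
    have := sub_eq_zero.1 this
    exact this.symm
  have hconst : ∀ i j : Fin N, v i = v j := by
    intro i j
    obtain ⟨w⟩ := hG.preconnected i j
    induction w with
    | nil => rfl
    | cons h p ih => exact (hedge _ _ h).trans ih
  -- all coordinates are equal and nonzero
  have hvne : ∀ i, v i ≠ 0 := fun i => by rw [hconst i k0]; exact hk0
  have heq : ∀ i : Fin N, Complex.I * (θ i : ℂ) = μ := by
    intro i
    have h1 : decoOp G θ v i = μ * v i := by rw [heig]; rfl
    have h2 : decoOp G θ v i
        = Complex.I * (θ i : ℂ) * v i + ∑ j ∈ G.neighborFinset i, (v j - v i) := rfl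
    have h3 : ∑ j ∈ G.neighborFinset i, (v j - v i) = 0 :=
      Finset.sum_eq_zero fun j _ => by rw [hconst j i, sub_self]
    have h4 : Complex.I * (θ i : ℂ) * v i = μ * v i := by
      rw [← h1, h2, h3, add_zero]
    exact mul_right_cancel₀ (hvne i) h4
  obtain ⟨i, j, hij⟩ := hθ
  apply hij
  have := (heq i).trans (heq j).symm
  have := mul_left_cancel₀ Complex.I_ne_zero this
  exact_mod_cast this

/-- Restricting a complex-differentiable function to the real line. -/
lemma comp_ofReal' {E : Type*} [NormedAddCommGroup E] [NormedSpace ℂ E]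
    {f : ℂ → E} {f' : E} {x : ℝ} (h : HasDerivAt f f' (x : ℂ)) :
    HasDerivAt (fun t : ℝ => f (t : ℂ)) f' x := by
  have A : HasDerivAt (fun t : ℝ => (t : ℂ)) 1 x := Complex.ofRealCLM.hasDerivAt
  simpa [Function.comp_def] using HasFDerivAt.comp_hasDerivAt x (h.hasFDerivAt.restrictScalars ℝ) A

/-- Exponential formula on a generalized eigenvector. -/
lemma exp_apply_genEig {E : Type*} [NormedAddCommGroup E] [NormedSpace ℂ E] [CompleteSpace E]
    (A : E →L[ℂ] E) {μ : ℂ} {v : E} {m : ℕ}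
    (hv : ((A - μ • (1 : E →L[ℂ] E)) ^ m) v = 0) (z : ℂ) :
    exp (z • A) v = ∑ k ∈ Finset.range m,
      (Complex.exp (z * μ) * ((k ! : ℂ)⁻¹ * z ^ k)) •
        (((A - μ • (1 : E →L[ℂ] E)) ^ k) v) := by
  classical
  set B : E →L[ℂ] E := A - μ • 1 with hB
  have hzA : z • A = (z * μ) • (1 : E →L[ℂ] E) + z • B := by
    rw [hB, smul_sub]
    rw [smul_smul]
    abel
  have hcomm : Commute ((z * μ) • (1 : E →L[ℂ] E)) (z • B) :=
    (Commute.one_left (z • B)).smul_left (z * μ)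
  have hexp1 : exp ((z * μ) • (1 : E →L[ℂ] E)) = Complex.exp (z * μ) • 1 := by
    rw [← Algebra.algebraMap_eq_smul_one, ← algebraMap_exp_comm,
      Algebra.algebraMap_eq_smul_one, Complex.exp_eq_exp_ℂ]
  have hexpB : exp (z • B) v
      = ∑ k ∈ Finset.range m, ((k ! : ℂ)⁻¹ * z ^ k) • ((B ^ k) v) := by
    have happ : exp (z • B) v
        = ∑' (n : ℕ), ((n ! : ℂ)⁻¹ • (z • B) ^ n) v := by
      rw [exp_eq_tsum ℂ]
      exact ContinuousLinearMap.map_tsum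
        ((ContinuousLinearMap.apply ℂ E) v) (expSeries_summable' (z • B))
    have hterm : ∀ n : ℕ, ((n ! : ℂ)⁻¹ • (z • B) ^ n) v
        = ((n ! : ℂ)⁻¹ * z ^ n) • ((B ^ n) v) := by
      intro n
      rw [smul_pow]
      simp [smul_smul]
    have hzero : ∀ n ∉ Finset.range m, ((n ! : ℂ)⁻¹ • (z • B) ^ n) v = 0 := by
      intro n hn
      rw [hterm n]
      have hmn : m ≤ n := by simpa using hn
      have : (B ^ n) v = 0 := by
        have : B ^ n = B ^ (n - m) * B ^ m := by
          rw [← pow_add]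
          congr 1
          omega
        rw [this, ContinuousLinearMap.mul_apply, hv, map_zero]
      rw [this, smul_zero]
    rw [happ, tsum_eq_sum hzero]
    exact Finset.sum_congr rfl fun n _ => hterm n
  rw [hzA, exp_add_of_commute_of_mem_ball (𝕂 := ℂ) (𝔸 := E →L[ℂ] E) hcomm
    ((expSeries_radius_eq_top ℂ (E →L[ℂ] E)).symm ▸ edist_lt_top _ _)
    ((expSeries_radius_eq_top ℂ (E →L[ℂ] E)).symm ▸ edist_lt_top _ _), hexp1]
  rw [ContinuousLinearMap.mul_apply]
  simp only [ContinuousLinearMap.smul_apply, ContinuousLinearMap.one_apply]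
  rw [hexpB, Finset.smul_sum]
  exact Finset.sum_congr rfl fun k _ => by rw [smul_smul]

/-- The scalar coefficient tends to zero. -/
lemma coeff_tendsto {μ : ℂ} (hμ : μ.re < 0) (k : ℕ) :
    Tendsto (fun t : ℝ => Complex.exp ((t : ℂ) * μ) * ((k ! : ℂ)⁻¹ * (t : ℂ) ^ k))
      atTop (nhds 0) := by
  have hpos : 0 < -μ.re := by linarith
  have h1 : Tendsto (fun t : ℝ => ((-μ.re) * t) ^ k * Real.exp (-((-μ.re) * t)))
      atTop (nhds 0) :=
    (Real.tendsto_pow_mul_exp_neg_atTop_nhds_zero k).comp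
      (Tendsto.const_mul_atTop hpos tendsto_id)
  have h2 : Tendsto (fun t : ℝ => t ^ k * Real.exp (μ.re * t)) atTop (nhds 0) := by
    have h3 := h1.const_mul (((-μ.re) ^ k)⁻¹)
    rw [mul_zero] at h3
    refine h3.congr fun t => ?_
    rw [mul_pow]
    have hne : ((-μ.re) ^ k) ≠ 0 := pow_ne_zero _ (ne_of_gt hpos)
    field_simp
  rw [tendsto_zero_iff_norm_tendsto_zero]
  have h4 : Tendsto (fun t : ℝ => (k ! : ℝ)⁻¹ * (t ^ k * Real.exp (μ.re * t)))
      atTop (nhds 0) := by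
    have := h2.const_mul ((k ! : ℝ)⁻¹)
    rwa [mul_zero] at this
  refine squeeze_zero_norm' ?_ h4
  filter_upwards [eventually_ge_atTop (0 : ℝ)] with t ht
  rw [norm_norm]
  have h5 : ((t : ℂ) * μ).re = t * μ.re := by simp
  have heq : ‖Complex.exp ((t : ℂ) * μ) * ((k ! : ℂ)⁻¹ * (t : ℂ) ^ k)‖
      = Real.exp (t * μ.re) * ((k ! : ℝ)⁻¹ * t ^ k) := by
    rw [norm_mul, norm_mul, Complex.norm_exp, h5,
      norm_inv, Complex.norm_natCast,
      norm_pow, Complex.norm_real, Real.norm_of_nonneg ht]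
  rw [heq]
  exact le_of_eq (by ring)

end DecoherenceAux

open DecoherenceAux NormedSpace

/-- If the graph is connected, `N ≥ 2`, and the frequencies `θ_i` are not all equal,
then every solution of `dX_i/dt = iθ_i X_i + Σ_{j∼i}(X_j − X_i)` converges to zero. -/
theorem decoherence_of_distinct_frequencies {N : ℕ} (hN : 2 ≤ N)
    (G : SimpleGraph (Fin N)) [DecidableRel G.Adj] (hG : G.Connected)
    (θ : Fin N → ℝ) (hθ : ∃ i j, θ i ≠ θ j) (X : ℝ → Fin N → ℂ)
    (hX : ∀ i t, HasDerivAt (fun s => X s i)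
      (Complex.I * (θ i : ℂ) * X t i + ∑ j ∈ G.neighborFinset i, (X t j - X t i)) t) :
    ∀ i, Tendsto (fun t => X t i) atTop (nhds 0) := by
  classical
  set f : Module.End ℂ (Fin N → ℂ) := decoOp G θ with hf
  set A : (Fin N → ℂ) →L[ℂ] (Fin N → ℂ) := LinearMap.toContinuousLinearMap f with hA
  have hAf : ∀ w, A w = f w := fun w => by
    rw [hA, LinearMap.coe_toContinuousLinearMap']
  -- derivative of X in the pi space
  have hXd : ∀ s, HasDerivAt X (A (X s)) s := by
    intro s
    rw [hasDerivAt_pi]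
    intro i
    have : A (X s) i = Complex.I * (θ i : ℂ) * X s i
        + ∑ j ∈ G.neighborFinset i, (X s j - X s i) := by
      rw [hAf]; rfl
    rw [this]
    exact hX i s
  set x0 : Fin N → ℂ := X 0 with hx0
  set Y : ℝ → Fin N → ℂ := fun t => exp ((t : ℂ) • A) x0 with hY
  -- derivative of Y
  have hYd : ∀ s : ℝ, HasDerivAt Y (A (Y s)) s := by
    intro s
    have hF : HasDerivAt (fun z : ℂ => exp (z • A) x0)
        ((A * exp ((s : ℂ) • A)) x0) (s : ℂ) := by
      have h1 := (hasDerivAt_exp_smul_const' A (s : ℂ)).clm_apply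
        (hasDerivAt_const (s : ℂ) x0)
      refine h1.congr_deriv ?_
      rw [map_zero, add_zero]
    have := comp_ofReal' hF
    rw [ContinuousLinearMap.mul_apply] at this
    exact this
  -- solution formula
  have hXY : ∀ t : ℝ, 0 ≤ t → X t = Y t := by
    intro t ht
    have huniq := ODE_solution_unique (E := Fin N → ℂ) (v := fun _ y => A y)
      (K := ‖A‖₊) (f := X) (g := Y) (a := 0) (b := t)
      (fun _ => A.lipschitz)
      (fun s _ => (hXd s).continuousAt.continuousWithinAt)
      (fun s _ => (hXd s).hasDerivWithinAt)
      (fun s _ => (hYd s).continuousAt.continuousWithinAt)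
      (fun s _ => (hYd s).hasDerivWithinAt)
      (by
        show X 0 = exp (((0 : ℝ) : ℂ) • A) x0
        have h00 : ((0 : ℝ) : ℂ) • A = 0 := by
          rw [Complex.ofReal_zero]
          exact zero_smul ℂ A
        rw [h00, exp_zero, ContinuousLinearMap.one_apply])
    exact huniq ⟨ht, le_refl t⟩
  -- decomposition of x0 into generalized eigenvectors
  have htop := Module.End.iSup_maxGenEigenspace_eq_top f
  have hx0mem : x0 ∈ ⨆ μ : ℂ, f.maxGenEigenspace μ := by
    rw [htop]; trivial
  rw [Submodule.mem_iSup_iff_exists_finsupp] at hx0mem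
  obtain ⟨c, hc, hcsum⟩ := hx0mem
  -- each piece tends to zero
  have hpow_eq : ∀ (μ : ℂ) (k : ℕ) (w : Fin N → ℂ),
      ((A - μ • (1 : (Fin N → ℂ) →L[ℂ] (Fin N → ℂ))) ^ k) w
        = ((f - μ • (1 : Module.End ℂ (Fin N → ℂ))) ^ k) w := by
    intro μ k
    induction k with
    | zero => intro w; rfl
    | succ n ih =>
      intro w
      rw [pow_succ, pow_succ, ContinuousLinearMap.mul_apply, Module.End.mul_apply, ih]
      simp only [ContinuousLinearMap.sub_apply, ContinuousLinearMap.smul_apply,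
        ContinuousLinearMap.one_apply, LinearMap.sub_apply, LinearMap.smul_apply,
        Module.End.one_apply, hAf]
  have hpiece : ∀ μ ∈ c.support,
      Tendsto (fun t : ℝ => exp ((t : ℂ) • A) (c μ)) atTop (nhds 0) := by
    intro μ hμs
    have hcμ : c μ ≠ 0 := Finsupp.mem_support_iff.1 hμs
    obtain ⟨k, hk⟩ := (Module.End.mem_maxGenEigenspace f μ (c μ)).1 (hc μ)
    -- μ is an eigenvalue
    have hgen : f.HasGenEigenvalue μ k := by
      rw [Module.End.hasGenEigenvalue_iff]
      intro hbot
      apply hcμ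
      have hmem : c μ ∈ f.genEigenspace μ (k : ℕ∞) := by
        rw [Module.End.mem_genEigenspace_nat]
        exact hk
      rw [hbot] at hmem
      simpa using hmem
    have heval := Module.End.hasEigenvalue_of_hasGenEigenvalue hgen
    obtain ⟨w, hw⟩ := heval.exists_hasEigenvector
    have hwe : f w = μ • w := Module.End.mem_eigenspace_iff.1 hw.1
    have hre : μ.re < 0 := eig_re_neg G hG θ hθ hw.2 hwe
    -- apply the exponential formula
    have hkA : ((A - μ • (1 : (Fin N → ℂ) →L[ℂ] (Fin N → ℂ))) ^ k) (c μ) = 0 := by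
      rw [hpow_eq]; exact hk
    have hform := fun t : ℝ => exp_apply_genEig A hkA (t : ℂ)
    rw [show (fun t : ℝ => exp ((t : ℂ) • A) (c μ))
        = fun t : ℝ => ∑ j ∈ Finset.range k,
          (Complex.exp ((t : ℂ) * μ) * ((j ! : ℂ)⁻¹ * (t : ℂ) ^ j)) •
            (((A - μ • (1 : (Fin N → ℂ) →L[ℂ] (Fin N → ℂ))) ^ j) (c μ))
      from funext hform]
    have : (0 : Fin N → ℂ) = ∑ j ∈ Finset.range k, (0 : Fin N → ℂ) := by simp
    rw [this]
    refine tendsto_finset_sum _ fun j _ => ?_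
    have := (coeff_tendsto hre j).smul_const
      (((A - μ • (1 : (Fin N → ℂ) →L[ℂ] (Fin N → ℂ))) ^ j) (c μ))
    simpa using this
  -- Y tends to zero
  have hYtend : Tendsto Y atTop (nhds 0) := by
    have hYsum : ∀ t : ℝ, Y t = ∑ μ ∈ c.support, exp ((t : ℂ) • A) (c μ) := by
      intro t
      rw [hY]
      have : x0 = ∑ μ ∈ c.support, c μ := by
        rw [← hcsum]; rfl
      rw [this]
      exact map_sum (exp ((t : ℂ) • A)) _ _
    rw [show Y = fun t : ℝ => ∑ μ ∈ c.support, exp ((t : ℂ) • A) (c μ) from funext hYsum]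
    have : (0 : Fin N → ℂ) = ∑ μ ∈ c.support, (0 : Fin N → ℂ) := by simp
    rw [this]
    exact tendsto_finset_sum _ fun μ hμ => hpiece μ hμ
  have hXtend : Tendsto X atTop (nhds 0) := by
    refine hYtend.congr' ?_
    filter_upwards [eventually_ge_atTop (0 : ℝ)] with t ht
    exact (hXY t ht).symm
  intro i
  have := tendsto_pi_nhds.1 hXtend i
  simpa using this
end

section
/- Consider the linear ODE system dX_i/dt = i θ X_i + Σ_{j : {i,j}∈E} (X_j − X_i) over a finite connected undirected graph G = (V,E), where all nodes share the same real frequency θ. Then every solution satisfies lim_{t→∞} |X_i(t) − e^{iθt} · (Σ_{j=1}^N X_j(0))/N| = 0 for all i ∈ V. -/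
open Filter Finset

private lemma nbr_sum_comm' {N : ℕ} (G : SimpleGraph (Fin N)) [DecidableRel G.Adj]
    {M : Type*} [AddCommMonoid M] (f : Fin N → Fin N → M) :
    ∑ i, ∑ j ∈ G.neighborFinset i, f i j = ∑ i, ∑ j ∈ G.neighborFinset i, f j i := by
  have h : ∀ i, G.neighborFinset i = Finset.univ.filter (G.Adj i) := by
    intro i; ext j; simp [SimpleGraph.mem_neighborFinset]
  simp_rw [h, Finset.sum_filter]
  rw [Finset.sum_comm]
  apply Finset.sum_congr rfl; intro i _
  apply Finset.sum_congr rfl; intro j _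
  by_cases hij : G.Adj i j
  · simp [hij, hij.symm]
  · have hji : ¬ G.Adj j i := fun h' => hij h'.symm
    simp only [if_neg hij, if_neg hji]

private lemma pt_id' (a b : ℂ) :
    2*((starRingEnd ℂ a) * (b - a)).re + ‖a - b‖^2 = ‖b‖^2 - ‖a‖^2 := by
  simp [Complex.sq_norm, Complex.normSq_apply, Complex.mul_re]
  ring

private lemma normsq_fun' (z : ℂ) : ‖z‖^2 = z.re*z.re + z.im*z.im := by
  simp [Complex.sq_norm, Complex.normSq_apply]

private lemma normsq_deriv' (f : ℝ → ℂ) (f' : ℂ) (t : ℝ) (h : HasDerivAt f f' t) :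
    HasDerivAt (fun s => ‖f s‖^2) (2 * ((starRingEnd ℂ (f t)) * f').re) t := by
  have hre : HasDerivAt (fun s => (f s).re) f'.re t :=
    Complex.reCLM.hasFDerivAt.comp_hasDerivAt t h
  have him : HasDerivAt (fun s => (f s).im) f'.im t :=
    Complex.imCLM.hasFDerivAt.comp_hasDerivAt t h
  have H := (hre.mul hre).add (him.mul him)
  simp only [normsq_fun']
  have H' : HasDerivAt (fun s => (f s).re * (f s).re + (f s).im * (f s).im)
      (f'.re * (f t).re + (f t).re * f'.re + (f'.im * (f t).im + (f t).im * f'.im)) t := H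
  refine H'.congr_deriv ?_
  simp [Complex.mul_re]; ring

private lemma gap' {N : ℕ} (G : SimpleGraph (Fin N)) [DecidableRel G.Adj] (hG : G.Connected) :
    ∃ c > 0, ∀ w : Fin N → ℂ, (∑ i, w i = 0) →
      c * (∑ i, ‖w i‖^2) ≤ ∑ i, ∑ j ∈ G.neighborFinset i, ‖w i - w j‖^2 := by
  classical
  set Q : (Fin N → ℂ) → ℝ := fun w => ∑ i, ∑ j ∈ G.neighborFinset i, ‖w i - w j‖^2 with hQdef
  set E : (Fin N → ℂ) → ℝ := fun w => ∑ i, ‖w i‖^2 with hEdef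
  have hQ0 : ∀ w, 0 ≤ Q w := by
    intro w; apply Finset.sum_nonneg; intro i _; apply Finset.sum_nonneg; intro j _; positivity
  have hE0 : ∀ w, 0 ≤ E w := by
    intro w; apply Finset.sum_nonneg; intro i _; positivity
  have hQcont : Continuous Q := by
    apply continuous_finset_sum; intro i _; apply continuous_finset_sum; intro j _
    exact (((continuous_apply i).sub (continuous_apply j)).norm).pow 2
  have hEcont : Continuous E := by
    apply continuous_finset_sum; intro i _
    exact ((continuous_apply i).norm).pow 2
  have hScont : Continuous (fun w : Fin N → ℂ => ∑ i, w i) := by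
    apply continuous_finset_sum; intro i _; exact continuous_apply i
  have hNpos : 0 < N := Fin.pos_iff_nonempty.mpr hG.nonempty
  have key : ∀ w : Fin N → ℂ, (∑ i, w i = 0) → Q w = 0 → w = 0 := by
    intro w hsum hq
    have hconst : ∀ i j, G.Adj i j → w i = w j := by
      intro i j hij
      have h1 : ∀ i ∈ Finset.univ, (0:ℝ) ≤ ∑ j ∈ G.neighborFinset i, ‖w i - w j‖^2 := by
        intro i _; apply Finset.sum_nonneg; intro j _; positivity
      have h2 := (Finset.sum_eq_zero_iff_of_nonneg h1).mp hq i (Finset.mem_univ i)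
      have h3 : ∀ j ∈ G.neighborFinset i, (0:ℝ) ≤ ‖w i - w j‖^2 := by
        intro j _; positivity
      have h4 := (Finset.sum_eq_zero_iff_of_nonneg h3).mp h2 j
        ((SimpleGraph.mem_neighborFinset G i j).mpr hij)
      have h5 : ‖w i - w j‖ = 0 := by nlinarith [norm_nonneg (w i - w j)]
      exact sub_eq_zero.mp (norm_eq_zero.mp h5)
    have hwalk : ∀ {u v : Fin N} (_ : G.Walk u v), w u = w v := by
      intro u v p
      induction p with
      | nil => rfl
      | cons h q ih => exact (hconst _ _ h).trans ih
    funext i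
    have hallconst : ∀ j, w j = w i := fun j => hwalk (hG.preconnected j i).some
    have : ∑ j, w j = (N : ℂ) * w i := by
      rw [Finset.sum_congr rfl (fun j _ => hallconst j)]
      simp [Finset.card_univ, mul_comm]
    rw [hsum] at this
    have hN : (N : ℂ) ≠ 0 := Nat.cast_ne_zero.mpr hNpos.ne'
    have := (mul_eq_zero.mp this.symm).resolve_left hN
    simpa using this
  have hEsc : ∀ (a : ℝ) (w : Fin N → ℂ), E (a • w) = a^2 * E w := by
    intro a w
    simp only [hEdef, Finset.mul_sum]
    apply Finset.sum_congr rfl; intro i _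
    simp [norm_smul, mul_pow, sq_abs]
  have hQsc : ∀ (a : ℝ) (w : Fin N → ℂ), Q (a • w) = a^2 * Q w := by
    intro a w
    simp only [hQdef, Finset.mul_sum]
    apply Finset.sum_congr rfl; intro i _
    apply Finset.sum_congr rfl; intro j _
    rw [show (a • w) i - (a • w) j = a • (w i - w j) by simp [smul_sub]]
    simp [norm_smul, mul_pow, sq_abs]
  have hsmulsum : ∀ (a : ℝ) (w : Fin N → ℂ), (∑ i, w i = 0) → ∑ i, (a • w) i = 0 := by
    intro a w hs
    simp only [Pi.smul_apply, ← Finset.smul_sum, hs, smul_zero]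
  have hnorm : ∀ w : Fin N → ℂ, w ≠ 0 → E ((Real.sqrt (E w))⁻¹ • w) = 1 := by
    intro w hw
    have hEpos : 0 < E w := by
      rcases Function.ne_iff.mp hw with ⟨i, hi⟩
      have : (0:ℝ) < ‖w i‖^2 := pow_pos (norm_pos_iff.mpr hi) 2
      exact lt_of_lt_of_le this (Finset.single_le_sum (f := fun i => ‖w i‖^2)
        (fun j _ => by positivity) (Finset.mem_univ i))
    rw [hEsc]
    rw [inv_pow, Real.sq_sqrt (le_of_lt hEpos)]
    field_simp
  set K : Set (Fin N → ℂ) := {w | (∑ i, w i = 0) ∧ E w = 1} with hKdef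
  by_cases hK : K.Nonempty
  · have hclosed : IsClosed K := by
      have : K = (fun w : Fin N → ℂ => ∑ i, w i) ⁻¹' {0} ∩ E ⁻¹' {1} := rfl
      rw [this]
      exact (isClosed_singleton.preimage hScont).inter (isClosed_singleton.preimage hEcont)
    have hbdd : Bornology.IsBounded K := by
      apply Bornology.IsBounded.subset (Metric.isBounded_closedBall (x := (0 : Fin N → ℂ)) (r := 1))
      intro w hw
      simp only [Metric.mem_closedBall, dist_zero_right]
      rw [pi_norm_le_iff_of_nonneg zero_le_one]
      intro i
      have h1 : ‖w i‖^2 ≤ E w := Finset.single_le_sum (f := fun i => ‖w i‖^2)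
        (fun j _ => by positivity) (Finset.mem_univ i)
      rw [hw.2] at h1
      nlinarith [norm_nonneg (w i)]
    have hcpt : IsCompact K := Metric.isCompact_of_isClosed_isBounded hclosed hbdd
    obtain ⟨w₀, hw₀K, hmin⟩ := hcpt.exists_isMinOn hK hQcont.continuousOn
    have hc0 : 0 < Q w₀ := by
      rcases lt_or_eq_of_le (hQ0 w₀) with h | h
      · exact h
      · exfalso
        have h0 : E w₀ = 1 := hw₀K.2
        rw [key w₀ hw₀K.1 h.symm] at h0
        simp [hEdef] at h0
    refine ⟨Q w₀, hc0, ?_⟩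
    intro w hsum
    by_cases hw : w = 0
    · simp [hw, hEdef, hQdef]
    · have hEpos : 0 < E w := by
        rcases Function.ne_iff.mp hw with ⟨i, hi⟩
        have : (0:ℝ) < ‖w i‖^2 := pow_pos (norm_pos_iff.mpr hi) 2
        exact lt_of_lt_of_le this (Finset.single_le_sum (f := fun i => ‖w i‖^2)
          (fun j _ => by positivity) (Finset.mem_univ i))
      set r := Real.sqrt (E w) with hrdef
      have hr2 : r^2 = E w := Real.sq_sqrt (le_of_lt hEpos)
      set u := r⁻¹ • w with hudef
      have huK : u ∈ K := ⟨hsmulsum _ _ hsum, hnorm w hw⟩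
      have h1 : Q w₀ ≤ Q u := (isMinOn_iff.mp hmin) u huK
      have h2 : Q u = r⁻¹^2 * Q w := hQsc r⁻¹ w
      have hrpos : 0 < r := Real.sqrt_pos.mpr hEpos
      calc Q w₀ * E w = Q w₀ * r^2 := by rw [hr2]
        _ ≤ Q u * r^2 := by nlinarith
        _ = Q w := by rw [h2, inv_pow]; field_simp
  · refine ⟨1, one_pos, ?_⟩
    intro w hsum
    by_cases hw : w = 0
    · simp [hw, hEdef, hQdef]
    · exfalso
      exact hK ⟨_, hsmulsum _ _ hsum, hnorm w hw⟩

/-- With a common frequency `θ`, every solution of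
`dX_i/dt = iθ X_i + Σ_{j∼i}(X_j − X_i)` over a connected graph satisfies
`lim_{t→∞} |X_i(t) − e^{iθt}·(Σ_j X_j(0))/N| = 0`. -/
theorem sync_common_frequency {N : ℕ} (G : SimpleGraph (Fin N))
    [DecidableRel G.Adj] (hG : G.Connected) (θ : ℝ) (X : ℝ → Fin N → ℂ)
    (hX : ∀ i t, HasDerivAt (fun s => X s i)
      (Complex.I * (θ : ℂ) * X t i + ∑ j ∈ G.neighborFinset i, (X t j - X t i)) t) :
    ∀ i, Tendsto
      (fun t => ‖X t i - Complex.exp (Complex.I * θ * t) * ((∑ j, X 0 j) / (N : ℂ))‖)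
      atTop (nhds 0) := by
  classical
  have hNpos : 0 < N := Fin.pos_iff_nonempty.mpr hG.nonempty
  have hNC : (N : ℂ) ≠ 0 := Nat.cast_ne_zero.mpr hNpos.ne'
  set c0 : ℂ := (∑ j, X 0 j) / (N : ℂ) with hc0def
  set W : ℝ → Fin N → ℂ :=
    fun t i => Complex.exp (-(Complex.I * θ) * t) * X t i - c0 with hWdef
  -- derivative of W
  have hW : ∀ i t, HasDerivAt (fun s => W s i)
      (∑ j ∈ G.neighborFinset i, (W t j - W t i)) t := by
    intro i t
    have h1 : HasDerivAt (fun s : ℝ => ((s : ℂ))) 1 t := (hasDerivAt_id t).ofReal_comp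
    have hexp : HasDerivAt (fun s : ℝ => Complex.exp (-(Complex.I * θ) * s))
        (Complex.exp (-(Complex.I * θ) * t) * -(Complex.I * θ)) t := by
      have h2 := h1.const_mul (-(Complex.I * (θ:ℂ)))
      simpa using h2.cexp
    have H := (hexp.mul (hX i t)).sub_const c0
    refine HasDerivAt.congr_deriv (f := fun s => W s i) H ?_
    rw [Finset.sum_congr rfl (fun j _ => show W t j - W t i
      = Complex.exp (-(Complex.I * θ) * t) * (X t j - X t i) by
        simp only [hWdef]; ring)]
    rw [← Finset.mul_sum]
    ring
  -- sum is conserved and zero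
  have hSderiv : ∀ t, HasDerivAt (fun s => ∑ i, W s i) 0 t := by
    intro t
    have H : HasDerivAt (fun s => ∑ i, W s i)
        (∑ i, ∑ j ∈ G.neighborFinset i, (W t j - W t i)) t :=
      HasDerivAt.fun_sum (fun i _ => hW i t)
    have h1 := nbr_sum_comm' G (fun i j => W t j - W t i)
    have h2 : ∑ i, ∑ j ∈ G.neighborFinset i, (W t i - W t j)
        = -∑ i, ∑ j ∈ G.neighborFinset i, (W t j - W t i) := by
      simp [← Finset.sum_neg_distrib, neg_sub]
    have h3 : ∑ i, ∑ j ∈ G.neighborFinset i, (W t j - W t i) = 0 := by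
      have := h1.trans h2
      exact add_self_eq_zero.mp (by linear_combination this)
    rwa [h3] at H
  have hSzero : ∀ t, ∑ i, W t i = 0 := by
    have hdiff : Differentiable ℝ (fun s => ∑ i, W s i) :=
      fun t => (hSderiv t).differentiableAt
    have hd0 : ∀ t, deriv (fun s => ∑ i, W s i) t = 0 := fun t => (hSderiv t).deriv
    have hconst : ∀ t, ∑ i, W t i = ∑ i, W 0 i :=
      fun t => is_const_of_deriv_eq_zero hdiff hd0 t 0
    have h0 : ∑ i, W 0 i = 0 := by
      simp only [hWdef, Complex.ofReal_zero, mul_zero, Complex.exp_zero, one_mul]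
      rw [Finset.sum_sub_distrib, Finset.sum_const, Finset.card_univ, Fintype.card_fin]
      rw [hc0def]
      rw [nsmul_eq_mul, mul_div_cancel₀ _ hNC, sub_self]
    intro t; rw [hconst t, h0]
  -- energy and its derivative
  set Efun : ℝ → ℝ := fun t => ∑ i, ‖W t i‖^2 with hEdef
  set Qfun : ℝ → ℝ := fun t => ∑ i, ∑ j ∈ G.neighborFinset i, ‖W t i - W t j‖^2 with hQdef
  have hEderiv : ∀ t, HasDerivAt Efun (-(Qfun t)) t := by
    intro t
    have H : HasDerivAt Efun
        (∑ i, 2 * ((starRingEnd ℂ (W t i)) * ∑ j ∈ G.neighborFinset i, (W t j - W t i)).re) t :=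
      HasDerivAt.fun_sum (fun i _ => normsq_deriv' _ _ t (hW i t))
    have hval : (∑ i, 2 * ((starRingEnd ℂ (W t i))
        * ∑ j ∈ G.neighborFinset i, (W t j - W t i)).re) = -(Qfun t) := by
      have hsplit : ∀ i, 2 * ((starRingEnd ℂ (W t i))
          * ∑ j ∈ G.neighborFinset i, (W t j - W t i)).re
          = ∑ j ∈ G.neighborFinset i, 2 * ((starRingEnd ℂ (W t i)) * (W t j - W t i)).re := by
        intro i
        rw [Finset.mul_sum, Complex.re_sum, Finset.mul_sum]
      simp_rw [hsplit]
      have hpt : ∀ i j, 2 * ((starRingEnd ℂ (W t i)) * (W t j - W t i)).re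
          = (‖W t j‖^2 - ‖W t i‖^2) - ‖W t i - W t j‖^2 := by
        intro i j
        have := pt_id' (W t i) (W t j)
        linarith
      simp_rw [hpt]
      rw [Finset.sum_congr rfl (fun i _ => Finset.sum_sub_distrib _ _), Finset.sum_sub_distrib]
      have hzero : ∑ i, ∑ j ∈ G.neighborFinset i, (‖W t j‖^2 - ‖W t i‖^2) = 0 := by
        have h1 := nbr_sum_comm' G (fun i j => ‖W t j‖^2 - ‖W t i‖^2)
        have h2 : ∑ i, ∑ j ∈ G.neighborFinset i, (‖W t i‖^2 - ‖W t j‖^2)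
            = -∑ i, ∑ j ∈ G.neighborFinset i, (‖W t j‖^2 - ‖W t i‖^2) := by
          simp [← Finset.sum_neg_distrib, neg_sub]
        have := h1.trans h2
        linarith
      rw [hzero, hQdef]
      ring
    rwa [hval] at H
  -- spectral gap
  obtain ⟨c, hcpos, hgap⟩ := gap' G hG
  have hgapt : ∀ t, c * Efun t ≤ Qfun t := fun t => hgap (W t) (hSzero t)
  -- Lyapunov function F
  set F : ℝ → ℝ := fun t => Efun t * Real.exp (c * t) with hFdef
  have hFderiv : ∀ t, HasDerivAt F
      (-(Qfun t) * Real.exp (c * t) + Efun t * (Real.exp (c * t) * c)) t := by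
    intro t
    have h := (hEderiv t).mul (((hasDerivAt_id t).const_mul c).exp)
    simp only [id_eq, mul_one] at h
    exact h
  have hFanti : Antitone F := by
    apply antitone_of_deriv_nonpos
    · exact fun t => (hFderiv t).differentiableAt
    · intro t
      rw [(hFderiv t).deriv]
      have h1 := hgapt t
      have h2 := Real.exp_pos (c * t)
      nlinarith
  have hE0 : ∀ t, 0 ≤ Efun t := by
    intro t; apply Finset.sum_nonneg; intro i _; positivity
  have hEbound : ∀ t, 0 ≤ t → Efun t ≤ F 0 * Real.exp (-(c * t)) := by
    intro t ht
    have h1 : F t ≤ F 0 := hFanti ht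
    have h2 := Real.exp_pos (c * t)
    have h3 : Efun t = F t * Real.exp (-(c * t)) := by
      rw [hFdef]
      simp only []
      rw [mul_assoc, ← Real.exp_add]
      simp
    rw [h3]
    have h4 := Real.exp_pos (-(c * t))
    nlinarith
  -- the decaying bound tends to 0
  have hbound0 : Tendsto (fun t => F 0 * Real.exp (-(c * t))) atTop (nhds 0) := by
    have h1 : Tendsto (fun t : ℝ => Real.exp (-(c * t))) atTop (nhds 0) :=
      Real.tendsto_exp_neg_atTop_nhds_zero.comp (Tendsto.const_mul_atTop hcpos tendsto_id)
    have := h1.const_mul (F 0)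
    simpa using this
  intro i
  -- ‖W t i‖² → 0
  have hsq : Tendsto (fun t => ‖W t i‖^2) atTop (nhds 0) := by
    apply tendsto_of_tendsto_of_tendsto_of_le_of_le' tendsto_const_nhds hbound0
    · exact Eventually.of_forall (fun t => by positivity)
    · filter_upwards [eventually_ge_atTop (0:ℝ)] with t ht
      exact le_trans (Finset.single_le_sum (f := fun j => ‖W t j‖^2)
        (fun j _ => by positivity) (Finset.mem_univ i)) (hEbound t ht)
  have hnormW : Tendsto (fun t => ‖W t i‖) atTop (nhds 0) := by
    have h1 := (Real.continuous_sqrt.tendsto 0).comp hsq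
    rw [Real.sqrt_zero] at h1
    refine h1.congr (fun t => ?_)
    simp [Function.comp, Real.sqrt_sq (norm_nonneg _)]
  -- convert to the original statement
  apply hnormW.congr
  intro t
  have hid : X t i - Complex.exp (Complex.I * θ * t) * c0
      = Complex.exp (Complex.I * θ * t) * (W t i) := by
    rw [hWdef]
    simp only []
    rw [mul_sub, ← mul_assoc, ← Complex.exp_add]
    ring_nf
    simp
  rw [hid, norm_mul]
  have habs : ‖Complex.exp (Complex.I * θ * t)‖ = 1 := by
    rw [Complex.norm_exp]
    simp
  rw [habs, one_mul]
end

section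
/- Consider the ODE dX_i/dt = i θ_i X_i + Σ_{j:{i,j}∈E}(X_j − X_i) over a finite connected undirected graph with N nodes. For each initial condition X(0), there exists a nonnegative real number Z (depending only on X(0)) such that lim_{t→∞} |X_i(t)| = Z for all i ∈ V. -/
open Filter Finset intervalIntegral
set_option maxHeartbeats 1000000

section aux

lemma barbalat' {f : ℝ → ℝ} {K M : ℝ} (hK : 0 < K)
    (hcont : Continuous f) (h0 : ∀ t, 0 ≤ f t)
    (hlip : ∀ s t, 0 ≤ s → s ≤ t → f t - f s ≤ K * (t - s))
    (hint : ∀ T, 0 ≤ T → (∫ t in (0:ℝ)..T, f t) ≤ M) :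
    Tendsto f atTop (nhds 0) := by
  by_contra h
  rw [Metric.tendsto_atTop] at h
  push_neg at h
  obtain ⟨ε, hε, hfreq⟩ := h
  set δ : ℝ := ε / (2 * K) with hδdef
  have hδ : 0 < δ := by positivity
  have hex : ∀ a : ℝ, ∃ t, a ≤ t ∧ ε ≤ f t := by
    intro a
    obtain ⟨t, ht, hft⟩ := hfreq a
    refine ⟨t, ht, ?_⟩
    rw [Real.dist_eq, sub_zero, abs_of_nonneg (h0 t)] at hft
    exact hft
  choose g hg1 hg2 using hex
  set u : ℕ → ℝ := fun n => Nat.rec (g δ) (fun _ p => g (p + δ)) n with hu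
  have hu0 : δ ≤ u 0 := hg1 δ
  have huS : ∀ n, u n + δ ≤ u (n + 1) := fun n => hg1 (u n + δ)
  have hfu : ∀ n, ε ≤ f (u n) := by
    intro n; cases n with
    | zero => exact hg2 δ
    | succ m => exact hg2 (u m + δ)
  have huδ : ∀ n, δ ≤ u n := by
    intro n; induction n with
    | zero => exact hu0
    | succ m ih => nlinarith [huS m]
  have hwin : ∀ n, δ * (ε / 2) ≤ ∫ t in (u n - δ)..(u n), f t := by
    intro n
    have hab : u n - δ ≤ u n := by linarith
    have hlow : ∀ s ∈ Set.Icc (u n - δ) (u n), ε / 2 ≤ f s := by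
      intro s hs
      have hs0 : 0 ≤ s := by have := huδ n; linarith [hs.1]
      have := hlip s (u n) hs0 hs.2
      have hKδ : K * (u n - s) ≤ K * δ := by
        apply mul_le_mul_of_nonneg_left _ hK.le
        linarith [hs.1]
      have hKδ2 : K * δ = ε / 2 := by
        field_simp [hδdef]
        rw [hδdef, mul_div_assoc', div_mul_eq_mul_div, div_eq_iff (mul_pos two_pos hK).ne']
        ring
      have := hfu n
      nlinarith
    calc δ * (ε / 2) = ∫ _ in (u n - δ)..(u n), (ε / 2) := by
            rw [intervalIntegral.integral_const]; simp
      _ ≤ ∫ t in (u n - δ)..(u n), f t := by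
            apply intervalIntegral.integral_mono_on hab
              (intervalIntegrable_const) (hcont.intervalIntegrable _ _) hlow
  have key : ∀ n : ℕ, (n + 1 : ℝ) * (δ * (ε / 2)) ≤ ∫ t in (0:ℝ)..(u n), f t := by
    intro n
    induction n with
    | zero =>
        have h1 : (∫ t in (0:ℝ)..(u 0 - δ), f t) + (∫ t in (u 0 - δ)..(u 0), f t)
            = ∫ t in (0:ℝ)..(u 0), f t :=
          intervalIntegral.integral_add_adjacent_intervals
            (hcont.intervalIntegrable _ _) (hcont.intervalIntegrable _ _)
        have h2 : 0 ≤ ∫ t in (0:ℝ)..(u 0 - δ), f t :=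
          intervalIntegral.integral_nonneg (by linarith [hu0]) (fun x _ => h0 x)
        have := hwin 0
        push_cast
        linarith
    | succ m ih =>
        have hmono : u m ≤ u (m+1) - δ := by linarith [huS m]
        have h1 : (∫ t in (0:ℝ)..(u m), f t) + (∫ t in (u m)..(u (m+1) - δ), f t)
            = ∫ t in (0:ℝ)..(u (m+1) - δ), f t :=
          intervalIntegral.integral_add_adjacent_intervals
            (hcont.intervalIntegrable _ _) (hcont.intervalIntegrable _ _)
        have h1' : (∫ t in (0:ℝ)..(u (m+1) - δ), f t) + (∫ t in (u (m+1) - δ)..(u (m+1)), f t)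
            = ∫ t in (0:ℝ)..(u (m+1)), f t :=
          intervalIntegral.integral_add_adjacent_intervals
            (hcont.intervalIntegrable _ _) (hcont.intervalIntegrable _ _)
        have h2 : 0 ≤ ∫ t in (u m)..(u (m+1) - δ), f t :=
          intervalIntegral.integral_nonneg hmono (fun x _ => h0 x)
        have := hwin (m+1)
        push_cast
        push_cast at ih
        linarith
  have hc : 0 < δ * (ε / 2) := by positivity
  obtain ⟨n, hn⟩ := exists_nat_gt (M / (δ * (ε / 2)))
  have h1 := key n
  have h2 := hint (u n) (by linarith [huδ n, hδ])
  have h3 : M < (n + 1 : ℝ) * (δ * (ε / 2)) := by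
    rw [div_lt_iff₀ hc] at hn
    nlinarith
  linarith


lemma adj_sum_comm' {N : ℕ} (G : SimpleGraph (Fin N)) [DecidableRel G.Adj] (g : Fin N → ℝ) :
    ∑ i, ∑ j ∈ G.neighborFinset i, g j = ∑ i, ∑ j ∈ G.neighborFinset i, g i := by
  have h : ∀ v : Fin N, G.neighborFinset v = Finset.univ.filter (G.Adj v) := by
    intro v; ext w; simp
  simp_rw [h, Finset.sum_filter]
  rw [Finset.sum_comm]
  apply Finset.sum_congr rfl; intro j _
  apply Finset.sum_congr rfl; intro i _
  by_cases hij : G.Adj i j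
  · rw [if_pos hij, if_pos ((G.adj_comm i j).mp hij)]
  · rw [if_neg hij, if_neg (fun hji => hij ((G.adj_comm j i).mp hji))]


end aux

open Filter

/-- Over a connected graph, the moduli of all components of a solution of
`dX_i/dt = iθ_i X_i + Σ_{j∼i}(X_j − X_i)` converge to a common nonnegative limit `Z`
depending only on the initial condition. -/
theorem moduli_converge_to_common_limit {N : ℕ} (G : SimpleGraph (Fin N))
    [DecidableRel G.Adj] (hG : G.Connected) (θ : Fin N → ℝ) (X : ℝ → Fin N → ℂ)
    (hX : ∀ i t, HasDerivAt (fun s => X s i)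
      (Complex.I * (θ i : ℂ) * X t i + ∑ j ∈ G.neighborFinset i, (X t j - X t i)) t) :
    ∃ Z : ℝ, 0 ≤ Z ∧ ∀ i, Tendsto (fun t => ‖X t i‖) atTop (nhds Z) := by
  classical
  have hN : 0 < N := by
    obtain ⟨i⟩ := hG.nonempty
    exact i.pos
  set F : ℝ → Fin N → ℂ := fun t i =>
    Complex.I * (θ i : ℂ) * X t i + ∑ j ∈ G.neighborFinset i, (X t j - X t i) with hF
  set E : ℝ → ℝ := fun t => ∑ i, ‖X t i‖^2 with hEdef
  set D : ℝ → ℝ := fun t => ∑ i, ∑ j ∈ G.neighborFinset i, ‖X t i - X t j‖^2 with hDdef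
  -- derivative of E
  have hkey : ∀ t, (∑ i, 2 * (inner ℝ (X t i) (F t i) : ℝ)) = -D t := by
    intro t
    have hterm : ∀ i, (2:ℝ) * (inner ℝ (X t i) (F t i) : ℝ)
        = ∑ j ∈ G.neighborFinset i,
            (2 * (inner ℝ (X t i) (X t j) : ℝ) - 2 * ‖X t i‖^2) := by
      intro i
      have h0 : (inner ℝ (X t i) (Complex.I * (θ i : ℂ) * X t i) : ℝ) = 0 := by
        simp [inner, Complex.mul_re, Complex.mul_im]
        ring
      rw [hF]
      rw [inner_add_right, h0, zero_add, inner_sum, Finset.mul_sum]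
      refine Finset.sum_congr rfl (fun j _ => ?_)
      rw [inner_sub_right, real_inner_self_eq_norm_sq]
      ring
    have hexp : D t = ∑ i, ∑ j ∈ G.neighborFinset i,
        (‖X t i‖^2 - 2 * (inner ℝ (X t i) (X t j) : ℝ) + ‖X t j‖^2) := by
      refine Finset.sum_congr rfl (fun i _ => Finset.sum_congr rfl (fun j _ => ?_))
      exact norm_sub_sq_real (X t i) (X t j)
    rw [Finset.sum_congr rfl (fun i _ => hterm i), hexp, eq_comm, neg_eq_iff_add_eq_zero]
    rw [← Finset.sum_add_distrib]
    simp_rw [← Finset.sum_add_distrib]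
    have : ∀ i, ∀ j ∈ G.neighborFinset i,
        (‖X t i‖^2 - 2 * (inner ℝ (X t i) (X t j) : ℝ) + ‖X t j‖^2)
          + (2 * (inner ℝ (X t i) (X t j) : ℝ) - 2 * ‖X t i‖^2)
        = ‖X t j‖^2 - ‖X t i‖^2 := by
      intro i j _; ring
    rw [Finset.sum_congr rfl (fun i _ => Finset.sum_congr rfl (this i))]
    simp_rw [Finset.sum_sub_distrib]
    rw [sub_eq_zero]
    exact adj_sum_comm' G (fun k => ‖X t k‖^2)
  have hE' : ∀ t, HasDerivAt E (-D t) t := by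
    intro t
    have h1 : HasDerivAt E (∑ i, 2 * (inner ℝ (X t i) (F t i) : ℝ)) t :=
      HasDerivAt.fun_sum (fun i _ => (hX i t).norm_sq)
    rwa [hkey t] at h1
  -- basic facts
  have hD0 : ∀ t, 0 ≤ D t := fun t =>
    Finset.sum_nonneg (fun i _ => Finset.sum_nonneg (fun j _ => sq_nonneg _))
  have hE0 : ∀ t, 0 ≤ E t := fun t => Finset.sum_nonneg (fun i _ => sq_nonneg _)
  have hXcont : ∀ i, Continuous (fun t => X t i) := fun i =>
    continuous_iff_continuousAt.mpr (fun t => (hX i t).differentiableAt.continuousAt)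
  have hDcont : Continuous D := by
    apply continuous_finset_sum
    intro i _
    apply continuous_finset_sum
    intro j _
    exact (((hXcont i).sub (hXcont j)).norm).pow 2
  have hEanti : Antitone E := by
    apply antitone_of_deriv_nonpos (fun t => (hE' t).differentiableAt)
    intro t
    rw [(hE' t).deriv]
    exact neg_nonpos.mpr (hD0 t)
  have hbdd : BddBelow (Set.range E) := ⟨0, by rintro x ⟨t, rfl⟩; exact hE0 t⟩
  set ℓ : ℝ := ⨅ t : ℝ, E t with hℓdef
  have hEtend : Tendsto E atTop (nhds ℓ) := tendsto_atTop_ciInf hEanti hbdd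
  have hℓ0 : 0 ≤ ℓ := le_ciInf (fun t => hE0 t)
  -- integral bound
  have hint : ∀ T, 0 ≤ T → (∫ t in (0:ℝ)..T, D t) ≤ E 0 := by
    intro T hT
    have h1 : (∫ t in (0:ℝ)..T, -D t) = E T - E 0 :=
      intervalIntegral.integral_eq_sub_of_hasDerivAt (fun t _ => hE' t)
        ((hDcont.neg).intervalIntegrable _ _)
    rw [intervalIntegral.integral_neg] at h1
    have := hE0 T
    linarith
  -- bounds on trajectory for t ≥ 0
  set B : ℝ := Real.sqrt (E 0) with hBdef
  have hB0 : 0 ≤ B := Real.sqrt_nonneg _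
  have hXB : ∀ t, 0 ≤ t → ∀ i, ‖X t i‖ ≤ B := by
    intro t ht i
    have h1 : ‖X t i‖^2 ≤ E t :=
      Finset.single_le_sum (fun j _ => sq_nonneg (‖X t j‖)) (Finset.mem_univ i)
    have h2 : E t ≤ E 0 := hEanti ht
    rw [hBdef, show ‖X t i‖ = Real.sqrt (‖X t i‖^2) by
      rw [Real.sqrt_sq (norm_nonneg _)]]
    exact Real.sqrt_le_sqrt (by linarith)
  set C : ℝ := (∑ i, |θ i|) * B + 2 * N * B with hCdef
  have hFB : ∀ t, 0 ≤ t → ∀ i, ‖F t i‖ ≤ C := by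
    intro t ht i
    have h1 : ‖Complex.I * (θ i : ℂ) * X t i‖ ≤ |θ i| * B := by
      rw [norm_mul, norm_mul, Complex.norm_I, one_mul, Complex.norm_real,
        Real.norm_eq_abs]
      exact mul_le_mul_of_nonneg_left (hXB t ht i) (abs_nonneg _)
    have h2 : ‖∑ j ∈ G.neighborFinset i, (X t j - X t i)‖ ≤ 2 * N * B := by
      calc ‖∑ j ∈ G.neighborFinset i, (X t j - X t i)‖
          ≤ ∑ j ∈ G.neighborFinset i, ‖X t j - X t i‖ := norm_sum_le _ _
        _ ≤ ∑ j ∈ G.neighborFinset i, (2 * B) := by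
            apply Finset.sum_le_sum
            intro j _
            calc ‖X t j - X t i‖ ≤ ‖X t j‖ + ‖X t i‖ := norm_sub_le _ _
              _ ≤ 2 * B := by linarith [hXB t ht j, hXB t ht i]
        _ = (G.neighborFinset i).card * (2 * B) := by rw [Finset.sum_const]; simp
        _ ≤ N * (2 * B) := by
            apply mul_le_mul_of_nonneg_right _ (by linarith)
            have := Finset.card_le_univ (G.neighborFinset i)
            simp at this
            exact_mod_cast this
        _ = 2 * N * B := by ring
    have h3 : |θ i| ≤ ∑ k, |θ k| :=
      Finset.single_le_sum (fun k _ => abs_nonneg (θ k)) (Finset.mem_univ i)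
    calc ‖F t i‖ ≤ ‖Complex.I * (θ i : ℂ) * X t i‖
          + ‖∑ j ∈ G.neighborFinset i, (X t j - X t i)‖ := norm_add_le _ _
      _ ≤ |θ i| * B + 2 * N * B := add_le_add h1 h2
      _ ≤ C := by
          rw [hCdef]
          have : |θ i| * B ≤ (∑ k, |θ k|) * B := mul_le_mul_of_nonneg_right h3 hB0
          linarith
  have hC0 : 0 ≤ C := le_trans (norm_nonneg _) (hFB 0 le_rfl ⟨0, hN⟩)
  -- derivative of D and Lipschitz bound
  have hD' : ∀ t, HasDerivAt D
      (∑ i, ∑ j ∈ G.neighborFinset i,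
        2 * (inner ℝ (X t i - X t j) (F t i - F t j) : ℝ)) t := by
    intro t
    apply HasDerivAt.fun_sum
    intro i _
    apply HasDerivAt.fun_sum
    intro j _
    exact ((hX i t).sub (hX j t)).norm_sq
  set K : ℝ := N * (N * (8 * B * C)) + 1 with hKdef
  have h8BC : (0:ℝ) ≤ 8 * B * C := mul_nonneg (mul_nonneg (by norm_num) hB0) hC0
  have hK : 0 < K := by
    have h1 : (0:ℝ) ≤ (N:ℝ) * ((N:ℝ) * (8 * B * C)) :=
      mul_nonneg (Nat.cast_nonneg N) (mul_nonneg (Nat.cast_nonneg N) h8BC)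
    rw [hKdef]; linarith
  have hDK : ∀ t, 0 ≤ t → ‖∑ i, ∑ j ∈ G.neighborFinset i,
      2 * (inner ℝ (X t i - X t j) (F t i - F t j) : ℝ)‖ ≤ K := by
    intro t ht
    rw [Real.norm_eq_abs]
    calc |∑ i, ∑ j ∈ G.neighborFinset i,
        2 * (inner ℝ (X t i - X t j) (F t i - F t j) : ℝ)|
        ≤ ∑ i, |∑ j ∈ G.neighborFinset i,
            2 * (inner ℝ (X t i - X t j) (F t i - F t j) : ℝ)| :=
          Finset.abs_sum_le_sum_abs _ _
      _ ≤ ∑ i : Fin N, (N * (8 * B * C)) := by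
          apply Finset.sum_le_sum
          intro i _
          calc |∑ j ∈ G.neighborFinset i,
              2 * (inner ℝ (X t i - X t j) (F t i - F t j) : ℝ)|
              ≤ ∑ j ∈ G.neighborFinset i,
                |2 * (inner ℝ (X t i - X t j) (F t i - F t j) : ℝ)| :=
                Finset.abs_sum_le_sum_abs _ _
            _ ≤ ∑ j ∈ G.neighborFinset i, (8 * B * C) := by
                apply Finset.sum_le_sum
                intro j _
                rw [abs_mul]
                have hinner : |(inner ℝ (X t i - X t j) (F t i - F t j) : ℝ)|
                    ≤ ‖X t i - X t j‖ * ‖F t i - F t j‖ := abs_real_inner_le_norm _ _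
                have hx : ‖X t i - X t j‖ ≤ 2 * B := by
                  calc ‖X t i - X t j‖ ≤ ‖X t i‖ + ‖X t j‖ := norm_sub_le _ _
                    _ ≤ 2 * B := by linarith [hXB t ht i, hXB t ht j]
                have hf : ‖F t i - F t j‖ ≤ 2 * C := by
                  calc ‖F t i - F t j‖ ≤ ‖F t i‖ + ‖F t j‖ := norm_sub_le _ _
                    _ ≤ 2 * C := by linarith [hFB t ht i, hFB t ht j]
                have := mul_le_mul hx hf (norm_nonneg _) (by linarith)
                calc |(2:ℝ)| * |(inner ℝ (X t i - X t j) (F t i - F t j) : ℝ)|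
                    ≤ 2 * (‖X t i - X t j‖ * ‖F t i - F t j‖) := by
                      rw [abs_two]
                      exact mul_le_mul_of_nonneg_left hinner (by norm_num)
                  _ ≤ 2 * ((2 * B) * (2 * C)) := by
                      apply mul_le_mul_of_nonneg_left _ (by norm_num)
                      calc ‖X t i - X t j‖ * ‖F t i - F t j‖
                          ≤ (2 * B) * ‖F t i - F t j‖ :=
                            mul_le_mul_of_nonneg_right hx (norm_nonneg _)
                        _ ≤ (2 * B) * (2 * C) :=
                            mul_le_mul_of_nonneg_left hf (by linarith)
                  _ = 8 * B * C := by ring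
            _ ≤ N * (8 * B * C) := by
                rw [Finset.sum_const, nsmul_eq_mul]
                apply mul_le_mul_of_nonneg_right _ h8BC
                have := Finset.card_le_univ (G.neighborFinset i)
                simp at this
                exact_mod_cast this
      _ = N * (N * (8 * B * C)) := by rw [Finset.sum_const, nsmul_eq_mul]; simp
      _ ≤ K := by rw [hKdef]; linarith
  have hlip : ∀ s t, 0 ≤ s → s ≤ t → D t - D s ≤ K * (t - s) := by
    intro s t hs hst
    have hIci : Convex ℝ (Set.Ici (0:ℝ)) := convex_Ici 0
    have hmvt := hIci.norm_image_sub_le_of_norm_hasDerivWithin_le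
      (f := D) (f' := fun t => ∑ i, ∑ j ∈ G.neighborFinset i,
        2 * (inner ℝ (X t i - X t j) (F t i - F t j) : ℝ))
      (fun x hx => (hD' x).hasDerivWithinAt) (fun x hx => hDK x hx) (C := K)
      (Set.mem_Ici.mpr hs) (Set.mem_Ici.mpr (le_trans hs hst))
    calc D t - D s ≤ |D t - D s| := le_abs_self _
      _ = ‖D t - D s‖ := rfl
      _ ≤ K * ‖t - s‖ := hmvt
      _ = K * (t - s) := by rw [Real.norm_eq_abs, abs_of_nonneg (by linarith)]
  have hDtend : Tendsto D atTop (nhds 0) :=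
    barbalat' hK hDcont hD0 hlip hint
  -- adjacent differences tend to zero
  have hsqrtD : Tendsto (fun t => Real.sqrt (D t)) atTop (nhds 0) := by
    have := (Real.continuous_sqrt.tendsto 0).comp hDtend
    simpa [Function.comp_def] using this
  have hadj : ∀ i j, G.Adj i j →
      Tendsto (fun t => ‖X t i - X t j‖) atTop (nhds 0) := by
    intro i j hij
    apply squeeze_zero (fun t => norm_nonneg _) _ hsqrtD
    intro t
    have h1 : ‖X t i - X t j‖^2 ≤ D t := by
      have h2 : ‖X t i - X t j‖^2 ≤ ∑ k ∈ G.neighborFinset i, ‖X t i - X t k‖^2 :=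
        Finset.single_le_sum (f := fun k => ‖X t i - X t k‖^2) (fun k _ => sq_nonneg _)
          ((SimpleGraph.mem_neighborFinset G i j).mpr hij)
      have h3 : ∑ k ∈ G.neighborFinset i, ‖X t i - X t k‖^2 ≤ D t :=
        Finset.single_le_sum
          (f := fun k => ∑ l ∈ G.neighborFinset k, ‖X t k - X t l‖^2)
          (fun k _ => Finset.sum_nonneg (fun l _ => sq_nonneg _))
          (Finset.mem_univ i)
      linarith
    calc ‖X t i - X t j‖ = Real.sqrt (‖X t i - X t j‖^2) := by
          rw [Real.sqrt_sq (norm_nonneg _)]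
      _ ≤ Real.sqrt (D t) := Real.sqrt_le_sqrt h1
  -- all pairs via connectivity
  have hpair : ∀ i j : Fin N, Tendsto (fun t => ‖X t i - X t j‖) atTop (nhds 0) := by
    have hwalk : ∀ (i j : Fin N) (w : G.Walk i j),
        Tendsto (fun t => ‖X t i - X t j‖) atTop (nhds 0) := by
      intro i j w
      induction w with
      | nil => simpa using tendsto_const_nhds (α := ℝ) (f := atTop) (a := (0:ℝ))
      | @cons a b c hab p ih =>
          apply squeeze_zero (fun t => norm_nonneg _) _
            (by simpa using (hadj a b hab).add ih)
          intro t
          calc ‖X t a - X t c‖ = ‖(X t a - X t b) + (X t b - X t c)‖ := by ring_nf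
            _ ≤ ‖X t a - X t b‖ + ‖X t b - X t c‖ := norm_add_le _ _
    intro i j
    obtain ⟨w⟩ := hG.preconnected i j
    exact hwalk i j w
  -- squared norms converge to ℓ / N
  have hdiff : ∀ i j : Fin N,
      Tendsto (fun t => ‖X t i‖^2 - ‖X t j‖^2) atTop (nhds 0) := by
    intro i j
    have hb : Tendsto (fun t => 2 * B * ‖X t i - X t j‖) atTop (nhds 0) := by
      simpa using (hpair i j).const_mul (2 * B)
    apply tendsto_of_tendsto_of_tendsto_of_le_of_le'
      (by rw [← neg_zero]; exact hb.neg) hb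
    · filter_upwards [eventually_ge_atTop (0:ℝ)] with t ht
      have h1 : |‖X t i‖^2 - ‖X t j‖^2| ≤ 2 * B * ‖X t i - X t j‖ := by
        have h2 : |‖X t i‖ - ‖X t j‖| ≤ ‖X t i - X t j‖ := abs_norm_sub_norm_le _ _
        have h3 : ‖X t i‖ + ‖X t j‖ ≤ 2 * B := by linarith [hXB t ht i, hXB t ht j]
        have h4 : ‖X t i‖^2 - ‖X t j‖^2
            = (‖X t i‖ - ‖X t j‖) * (‖X t i‖ + ‖X t j‖) := by ring
        rw [h4, abs_mul, abs_of_nonneg (by positivity : (0:ℝ) ≤ ‖X t i‖ + ‖X t j‖)]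
        calc |‖X t i‖ - ‖X t j‖| * (‖X t i‖ + ‖X t j‖)
            ≤ ‖X t i - X t j‖ * (2 * B) := by
              apply mul_le_mul h2 h3 (by positivity) (norm_nonneg _)
          _ = 2 * B * ‖X t i - X t j‖ := by ring
      linarith [neg_abs_le (‖X t i‖^2 - ‖X t j‖^2), h1]
    · filter_upwards [eventually_ge_atTop (0:ℝ)] with t ht
      have h1 : |‖X t i‖^2 - ‖X t j‖^2| ≤ 2 * B * ‖X t i - X t j‖ := by
        have h2 : |‖X t i‖ - ‖X t j‖| ≤ ‖X t i - X t j‖ := abs_norm_sub_norm_le _ _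
        have h3 : ‖X t i‖ + ‖X t j‖ ≤ 2 * B := by linarith [hXB t ht i, hXB t ht j]
        have h4 : ‖X t i‖^2 - ‖X t j‖^2
            = (‖X t i‖ - ‖X t j‖) * (‖X t i‖ + ‖X t j‖) := by ring
        rw [h4, abs_mul, abs_of_nonneg (by positivity : (0:ℝ) ≤ ‖X t i‖ + ‖X t j‖)]
        calc |‖X t i‖ - ‖X t j‖| * (‖X t i‖ + ‖X t j‖)
            ≤ ‖X t i - X t j‖ * (2 * B) := by
              apply mul_le_mul h2 h3 (by positivity) (norm_nonneg _)
          _ = 2 * B * ‖X t i - X t j‖ := by ring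
      linarith [le_abs_self (‖X t i‖^2 - ‖X t j‖^2), h1]
  have hsq : ∀ i : Fin N, Tendsto (fun t => ‖X t i‖^2) atTop (nhds (ℓ / N)) := by
    intro i
    have hsum : Tendsto (fun t => ∑ j : Fin N, (‖X t i‖^2 - ‖X t j‖^2)) atTop (nhds 0) := by
      have := tendsto_finset_sum Finset.univ (fun j (_ : j ∈ Finset.univ) => hdiff i j)
      simpa using this
    have hNE : Tendsto (fun t => (N:ℝ) * ‖X t i‖^2) atTop (nhds (ℓ + 0)) := by
      have heq : (fun t => (N:ℝ) * ‖X t i‖^2)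
          = fun t => E t + ∑ j : Fin N, (‖X t i‖^2 - ‖X t j‖^2) := by
        funext t
        rw [hEdef]
        rw [Finset.sum_sub_distrib]
        simp [Finset.card_univ, mul_comm]
      rw [heq]
      exact hEtend.add hsum
    rw [add_zero] at hNE
    have hNne : (N:ℝ) ≠ 0 := Nat.cast_ne_zero.mpr hN.ne'
    have := hNE.const_mul ((N:ℝ)⁻¹)
    have heq2 : (fun t => (N:ℝ)⁻¹ * ((N:ℝ) * ‖X t i‖^2)) = fun t => ‖X t i‖^2 := by
      funext t
      field_simp
    rw [heq2] at this
    rwa [show (N:ℝ)⁻¹ * ℓ = ℓ / N by ring] at this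
  refine ⟨Real.sqrt (ℓ / N), Real.sqrt_nonneg _, fun i => ?_⟩
  have := (Real.continuous_sqrt.tendsto (ℓ / N)).comp (hsq i)
  have heq : (fun t => Real.sqrt (‖X t i‖^2)) = fun t => ‖X t i‖ := by
    funext t
    rw [Real.sqrt_sq (norm_nonneg _)]
  rwa [show Real.sqrt ∘ (fun t => ‖X t i‖^2) = fun t => ‖X t i‖ from heq] at this
end

section
/- Consider the Lindblad-type master equation dρ/dt = −(i/ℏ)[H, ρ] + Σ_{{j,k}∈E} (U_{jk} ρ U_{jk}† − ρ) on (ℂ²)^{⊗n}, where H is diagonal in the computational basis with eigenvalues λ_{|p⟩⟨p|}. Then the entry [ρ(t)]_{|𝟎⟩⟨𝟏|} at the all-zeros row and all-ones column evolves as [ρ(t)]_{|𝟎⟩⟨𝟏|} = [ρ(0)]_{|𝟎⟩⟨𝟏|} e^{−i(λ_{|𝟎⟩⟨𝟎|} − λ_{|𝟏⟩⟨𝟏|}) t/ℏ}; in particular its modulus is constant in time. -/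
/-- For the synchronization master equation with diagonal Hamiltonian, the
`|𝟎⟩⟨𝟏|`-entry evolves as a pure phase:
`[ρ(t)]_{𝟎𝟏} = [ρ(0)]_{𝟎𝟏} e^{−i(λ_𝟎 − λ_𝟏)t/ℏ}`; in particular its modulus is constant. -/
theorem corner_entry_phase_evolution {n : ℕ} (ℏ : ℝ) (hℏ : 0 < ℏ)
    (E : Finset (Fin n × Fin n))
    (lam : (Fin n → Fin 2) → ℝ)
    (H : Matrix (Fin n → Fin 2) (Fin n → Fin 2) ℂ)
    (hH : H = Matrix.diagonal fun p => (lam p : ℂ))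
    (U : Fin n × Fin n → Matrix (Fin n → Fin 2) (Fin n → Fin 2) ℂ)
    (hU : ∀ e, U e = Matrix.of fun a b =>
      if (fun i => a (Equiv.swap e.1 e.2 i)) = b then (1 : ℂ) else 0)
    (ρ : ℝ → Matrix (Fin n → Fin 2) (Fin n → Fin 2) ℂ)
    (hρ : ∀ x y t, HasDerivAt (fun s => ρ s x y)
      (((-(Complex.I / (ℏ : ℂ))) • (H * ρ t - ρ t * H)
        + ∑ e ∈ E, (U e * ρ t * (U e).conjTranspose - ρ t)) x y) t) :
    ∀ t : ℝ,
      ρ t (fun _ => 0) (fun _ => 1)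
        = ρ 0 (fun _ => 0) (fun _ => 1)
          * Complex.exp (-Complex.I * ((lam (fun _ => 0) : ℂ) - (lam (fun _ => 1) : ℂ)) * t / (ℏ : ℂ))
      ∧ ‖ρ t (fun _ => 0) (fun _ => 1)‖
          = ‖ρ 0 (fun _ => 0) (fun _ => 1)‖ := by
  set x : Fin n → Fin 2 := fun _ => 0 with hx
  set y : Fin n → Fin 2 := fun _ => 1 with hy
  set c : ℂ := -Complex.I * ((lam x : ℂ) - lam y) / ℏ with hc
  have key : ∀ s : ℝ, HasDerivAt (fun u => ρ u x y) (c * ρ s x y) s := by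
    intro s
    have h := hρ x y s
    convert h using 1
    have hterm : ∀ e ∈ E, (U e * ρ s * (U e).conjTranspose - ρ s) x y = 0 := by
      intro e _
      have hxs : (fun i => x (Equiv.swap e.1 e.2 i)) = x := rfl
      have hys : (fun i => y (Equiv.swap e.1 e.2 i)) = y := rfl
      simp [Matrix.sub_apply, Matrix.mul_apply, hU, hxs, hys,
        Matrix.conjTranspose_apply, apply_ite, Finset.sum_ite_eq, Finset.sum_ite_eq']
    rw [Matrix.add_apply, Matrix.sum_apply, Finset.sum_eq_zero hterm, add_zero,
      Matrix.smul_apply, Matrix.sub_apply, hH, Matrix.diagonal_mul, Matrix.mul_diagonal]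
    rw [hc, smul_eq_mul]
    ring
  intro t
  have hform : ρ t x y
      = ρ 0 x y * Complex.exp (-Complex.I * ((lam x : ℂ) - lam y) * t / ℏ) := by
    have hexp : ∀ s : ℝ, HasDerivAt (fun u : ℝ => Complex.exp (-c * u))
        (-c * Complex.exp (-c * s)) s := by
      intro s
      have hlin : HasDerivAt (fun u : ℝ => -c * (u : ℂ)) (-c) s := by
        simpa using (Complex.ofRealCLM.hasDerivAt (x := s)).const_mul (-c)
      simpa [mul_comm] using hlin.cexp
    have hg : ∀ s : ℝ, HasDerivAt (fun u : ℝ => ρ u x y * Complex.exp (-c * u)) 0 s := by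
      intro s
      have := (key s).fun_mul (hexp s)
      refine this.congr_deriv ?_
      ring
    have hconst : ρ t x y * Complex.exp (-c * t) = ρ 0 x y * Complex.exp (-c * 0) :=
      is_const_of_deriv_eq_zero (fun s => (hg s).differentiableAt)
        (fun s => (hg s).deriv) t 0
    have h2 : ρ t x y = ρ 0 x y * Complex.exp (c * t) := by
      have := congrArg (· * Complex.exp (c * t)) hconst
      simpa [mul_assoc, ← Complex.exp_add] using this
    rw [h2]
    congr 1
    rw [hc]
    ring_nf
  refine ⟨hform, ?_⟩
  have harg : -Complex.I * ((lam x : ℂ) - lam y) * t / ℏ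
      = ((-((lam x - lam y) * t / ℏ) : ℝ) : ℂ) * Complex.I := by
    push_cast
    ring
  rw [hform, norm_mul, harg, Complex.norm_exp_ofReal_mul_I, mul_one]
end

section
/- Under the master equation dρ/dt = −(i/ℏ)[H, ρ] + Σ_{{j,k}∈E}(U_{jk} ρ U_{jk}† − ρ) with H diagonal in the computational basis, the diagonal entries evolve autonomously: d/dt [ρ(t)]_{|x⟩⟨x|} = Σ_{{j,k}∈E} ([ρ(t)]_{|u_{jk}(x)⟩⟨u_{jk}(x)|} − [ρ(t)]_{|x⟩⟨x|}), i.e., the Hamiltonian contributes nothing to diagonal entries. -/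
/-- Under the synchronization master equation with diagonal Hamiltonian, the diagonal
entries evolve autonomously: `d/dt [ρ]_{xx} = Σ_{{j,k}∈E}([ρ]_{u_{jk}(x)u_{jk}(x)} − [ρ]_{xx})`;
the Hamiltonian contributes nothing. -/
theorem master_equation_diagonal_entries {n : ℕ} (ℏ : ℝ) (hℏ : 0 < ℏ)
    (E : Finset (Fin n × Fin n))
    (lam : (Fin n → Fin 2) → ℝ)
    (H : Matrix (Fin n → Fin 2) (Fin n → Fin 2) ℂ)
    (hH : H = Matrix.diagonal fun p => (lam p : ℂ))
    (U : Fin n × Fin n → Matrix (Fin n → Fin 2) (Fin n → Fin 2) ℂ)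
    (hU : ∀ e, U e = Matrix.of fun a b =>
      if (fun i => a (Equiv.swap e.1 e.2 i)) = b then (1 : ℂ) else 0)
    (ρ : ℝ → Matrix (Fin n → Fin 2) (Fin n → Fin 2) ℂ)
    (hρ : ∀ x y t, HasDerivAt (fun s => ρ s x y)
      (((-(Complex.I / (ℏ : ℂ))) • (H * ρ t - ρ t * H)
        + ∑ e ∈ E, (U e * ρ t * (U e).conjTranspose - ρ t)) x y) t) :
    ∀ (x : Fin n → Fin 2) (t : ℝ),
      HasDerivAt (fun s => ρ s x x)
        (∑ e ∈ E,
          (ρ t (fun i => x (Equiv.swap e.1 e.2 i)) (fun i => x (Equiv.swap e.1 e.2 i))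
            - ρ t x x)) t := by
  intro x t
  have h := hρ x x t
  have key : (((-(Complex.I / (ℏ : ℂ))) • (H * ρ t - ρ t * H)
        + ∑ e ∈ E, (U e * ρ t * (U e).conjTranspose - ρ t)) x x)
      = (∑ e ∈ E,
          (ρ t (fun i => x (Equiv.swap e.1 e.2 i)) (fun i => x (Equiv.swap e.1 e.2 i))
            - ρ t x x)) := by
    have hcomm : (H * ρ t - ρ t * H) x x = 0 := by
      simp [hH, Matrix.sub_apply, Matrix.diagonal_mul, Matrix.mul_diagonal, mul_comm]
    rw [Matrix.add_apply, Matrix.smul_apply, hcomm, smul_zero, zero_add,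
      Matrix.sum_apply]
    refine Finset.sum_congr rfl fun e _ => ?_
    rw [Matrix.sub_apply]
    congr 1
    rw [Matrix.mul_apply]
    have hUe : ∀ a b, U e a b = if (fun i => a (Equiv.swap e.1 e.2 i)) = b then (1:ℂ) else 0 := by
      intro a b; rw [hU e]; rfl
    have hrow : ∀ b, (U e * ρ t) x b = ρ t (fun i => x (Equiv.swap e.1 e.2 i)) b := by
      intro b
      rw [Matrix.mul_apply]
      rw [Finset.sum_eq_single (fun i => x (Equiv.swap e.1 e.2 i))]
      · rw [hUe]; simp
      · intro a _ ha; rw [hUe]; simp [Ne.symm ha]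
      · intro h; exact absurd (Finset.mem_univ _) h
    rw [Finset.sum_eq_single (fun i => x (Equiv.swap e.1 e.2 i))]
    · rw [hrow, Matrix.conjTranspose_apply, hUe]; simp
    · intro b _ hb
      rw [Matrix.conjTranspose_apply, hUe]
      simp [Ne.symm hb]
    · intro h; exact absurd (Finset.mem_univ _) h
  rw [key] at h
  exact h
end

section
/- Let E be a set of transpositions of {1,…,n} generating a subgroup acting on binary strings {0,1}^n, and suppose the transpositions in E correspond to edges of a connected graph on {1,…,n}. For a solution c : [0,∞) → ℝ^{({0,1}^n)} of d/dt c_x = Σ_{{j,k}∈E}(c_{u_{jk}(x)} − c_x), for each x with Hamming weight k, lim_{t→∞} c_x(t) = (Σ_{y : weight(y)=k} c_y(0)) / C(n,k), where C(n,k) is the binomial coefficient. -/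
open Finset

variable {n : ℕ}

def HWt (x : Fin n → Fin 2) : ℕ := ∑ i, (x i).val

lemma hwt_swap (e : Fin n × Fin n) (x : Fin n → Fin 2) :
    HWt (fun i => x (Equiv.swap e.1 e.2 i)) = HWt x :=
  Equiv.sum_comp (Equiv.swap e.1 e.2) (fun i => (x i).val)

lemma hwt_perm (σ : Equiv.Perm (Fin n)) (x : Fin n → Fin 2) :
    HWt (fun i => x (σ i)) = HWt x :=
  Equiv.sum_comp σ (fun i => (x i).val)

lemma closure_swaps_eq_top (E : Finset (Fin n × Fin n))
    (hconn : (SimpleGraph.fromRel (fun a b => (a, b) ∈ E)).Connected) :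
    Subgroup.closure {σ : Equiv.Perm (Fin n) |
        σ.IsSwap ∧ ∃ e ∈ E, σ = Equiv.swap e.1 e.2} = ⊤ := by
  set S : Set (Equiv.Perm (Fin n)) :=
    {σ : Equiv.Perm (Fin n) | σ.IsSwap ∧ ∃ e ∈ E, σ = Equiv.swap e.1 e.2} with hSdef
  have hS : ∀ σ ∈ S, σ.IsSwap := fun σ hσ => hσ.1
  have key : ∀ (j k : Fin n), ∀ _w : (SimpleGraph.fromRel (fun a b => (a, b) ∈ E)).Walk j k,
      ∃ g ∈ Subgroup.closure S, g j = k := by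
    intro j k w
    induction w with
    | nil => exact ⟨1, one_mem _, rfl⟩
    | @cons u v w' hadj p ih =>
      obtain ⟨g, hg, hgv⟩ := ih
      obtain ⟨hne, hmem⟩ := hadj
      have hsw : Equiv.swap u v ∈ S := by
        refine ⟨⟨u, v, hne, rfl⟩, ?_⟩
        rcases hmem with h1 | h1
        · exact ⟨(u, v), h1, rfl⟩
        · exact ⟨(v, u), h1, by rw [Equiv.swap_comm]⟩
      refine ⟨g * Equiv.swap u v, mul_mem hg (Subgroup.subset_closure hsw), ?_⟩
      rw [Equiv.Perm.mul_apply, Equiv.swap_apply_left, hgv]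
  have htrans : MulAction.IsPretransitive (Subgroup.closure S) (Fin n) := by
    constructor
    intro j k
    obtain ⟨w⟩ := hconn.preconnected j k
    obtain ⟨g, hg, hgj⟩ := key j k w
    exact ⟨⟨g, hg⟩, hgj⟩
  exact closure_of_isSwap_of_isPretransitive hS

lemma count_one_ofFn (x : Fin n → Fin 2) :
    (List.ofFn x).count 1 = HWt x := by
  unfold HWt
  induction n with
  | zero => simp
  | succ m ih =>
    rw [List.ofFn_succ, List.count_cons, Fin.sum_univ_succ, ih (fun i => x i.succ)]
    rcases Fin.exists_fin_two.mp ⟨x 0, rfl⟩ with h | h <;> simp [h] <;> omega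

lemma count_zero_add_count_one (l : List (Fin 2)) :
    l.count 0 + l.count 1 = l.length := by
  induction l with
  | nil => simp
  | cons a t ih =>
    rw [List.count_cons, List.count_cons, List.length_cons]
    rcases Fin.exists_fin_two.mp ⟨a, rfl⟩ with h | h <;> simp [h] <;> omega

lemma exists_perm_of_hwt_eq {x y : Fin n → Fin 2} (h : HWt x = HWt y) :
    ∃ σ : Equiv.Perm (Fin n), y = fun i => x (σ i) := by
  have hperm : (List.ofFn x).Perm (List.ofFn y) := by
    rw [List.perm_iff_count]
    intro a
    have h1 : (List.ofFn x).count 1 = (List.ofFn y).count 1 := by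
      rw [count_one_ofFn, count_one_ofFn, h]
    have hl : (List.ofFn x).length = (List.ofFn y).length := by simp
    have h0 : (List.ofFn x).count 0 = (List.ofFn y).count 0 := by
      have := count_zero_add_count_one (List.ofFn x)
      have := count_zero_add_count_one (List.ofFn y)
      omega
    rcases Fin.exists_fin_two.mp ⟨a, rfl⟩ with ha | ha <;> rw [ha] <;> assumption
  -- sorted versions agree
  have hs : x ∘ Tuple.sort x = y ∘ Tuple.sort y := by
    haveI : IsAntisymm (Fin 2) (· ≤ ·) := ⟨fun a b => le_antisymm⟩
    refine List.ofFn_injective ((fun h1 h2 h3 => List.Perm.eq_of_sortedLE h2 h3 h1) ?_ ?_ ?_)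
    · exact ((Tuple.sort x).ofFn_comp_perm x).trans
        (hperm.trans ((Tuple.sort y).ofFn_comp_perm y).symm)
    · exact (Tuple.monotone_sort x).sortedLE_ofFn
    · exact (Tuple.monotone_sort y).sortedLE_ofFn
  refine ⟨(Tuple.sort y).symm.trans (Tuple.sort x), ?_⟩
  funext i
  have := congrFun hs ((Tuple.sort y).symm i)
  simpa using this.symm

lemma invariant_under_perm (E : Finset (Fin n × Fin n))
    (hconn : (SimpleGraph.fromRel (fun a b => (a, b) ∈ E)).Connected)
    (f : (Fin n → Fin 2) → ℝ)
    (hf : ∀ e ∈ E, ∀ x : Fin n → Fin 2, f (fun i => x (Equiv.swap e.1 e.2 i)) = f x) :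
    ∀ (σ : Equiv.Perm (Fin n)) (x : Fin n → Fin 2), f (fun i => x (σ i)) = f x := by
  intro σ x
  have hmem : σ ∈ Subgroup.closure {σ : Equiv.Perm (Fin n) |
      σ.IsSwap ∧ ∃ e ∈ E, σ = Equiv.swap e.1 e.2} := by
    rw [closure_swaps_eq_top E hconn]; trivial
  revert x
  induction hmem using Subgroup.closure_induction with
  | mem τ hτ =>
    obtain ⟨-, e, he, rfl⟩ := hτ
    exact fun x => hf e he x
  | one => intro x; rfl
  | mul τ ρ hτ hρ ihτ ihρ =>
    intro x
    have : (fun i => x ((τ * ρ) i)) = (fun i => (fun j => x (τ j)) (ρ i)) := rfl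
    rw [this, ihρ (fun j => x (τ j)), ihτ]
  | inv τ hτ ihτ =>
    intro x
    have := ihτ (fun i => x (τ⁻¹ i))
    simp only [Equiv.Perm.inv_def, Equiv.symm_apply_apply] at this
    have h2 : (fun i => x i) = x := rfl
    rw [h2] at this
    exact this.symm

lemma const_on_class (E : Finset (Fin n × Fin n))
    (hconn : (SimpleGraph.fromRel (fun a b => (a, b) ∈ E)).Connected)
    (f : (Fin n → Fin 2) → ℝ)
    (hf : ∀ e ∈ E, ∀ x : Fin n → Fin 2, f (fun i => x (Equiv.swap e.1 e.2 i)) = f x)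
    {x y : Fin n → Fin 2} (h : HWt x = HWt y) : f x = f y := by
  obtain ⟨σ, rfl⟩ := exists_perm_of_hwt_eq h
  exact (invariant_under_perm E hconn f hf σ x).symm

lemma card_hwt_class (k : ℕ) :
    ((Finset.univ.filter (fun y : Fin n → Fin 2 => HWt y = k)).card) = n.choose k := by
  have hp := Finset.card_powersetCard k (Finset.univ : Finset (Fin n))
  rw [Finset.card_univ, Fintype.card_fin] at hp
  rw [← hp]
  apply Finset.card_bij (fun x _ => Finset.univ.filter (fun i => x i = 1))
  · intro x hx
    rw [Finset.mem_filter] at hx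
    rw [Finset.mem_powersetCard]
    refine ⟨Finset.subset_univ _, ?_⟩
    rw [← hx.2]
    unfold HWt
    rw [Finset.card_filter]
    apply Finset.sum_congr rfl
    intro i _
    rcases Fin.exists_fin_two.mp ⟨x i, rfl⟩ with h | h <;> simp [h]
  · intro x hx y hy hxy
    funext i
    have := Finset.ext_iff.mp hxy i
    simp only [Finset.mem_filter, Finset.mem_univ, true_and] at this
    rcases Fin.exists_fin_two.mp ⟨x i, rfl⟩ with h | h <;>
      rcases Fin.exists_fin_two.mp ⟨y i, rfl⟩ with h2 | h2 <;>
      simp [h, h2] at this ⊢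
  · intro s hs
    rw [Finset.mem_powersetCard] at hs
    refine ⟨fun i => if i ∈ s then 1 else 0, ?_, ?_⟩
    · rw [Finset.mem_filter]
      refine ⟨Finset.mem_univ _, ?_⟩
      unfold HWt
      rw [← hs.2]
      have h1 : ∑ i : Fin n, ((if i ∈ s then (1 : Fin 2) else 0)).val
          = ∑ i : Fin n, (if i ∈ s then 1 else 0) := by
        apply Finset.sum_congr rfl
        intro i _
        by_cases h : i ∈ s <;> simp [h]
      rw [h1, Finset.sum_ite_mem, Finset.univ_inter, Finset.card_eq_sum_ones]
    · ext i
      simp only [Finset.mem_filter, Finset.mem_univ, true_and]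
      by_cases h : i ∈ s <;> simp [h]

/-- the generator -/
def Aop (E : Finset (Fin n × Fin n)) (f : (Fin n → Fin 2) → ℝ) : (Fin n → Fin 2) → ℝ :=
  fun x => ∑ e ∈ E, (f (fun i => x (Equiv.swap e.1 e.2 i)) - f x)

def ip (f g : (Fin n → Fin 2) → ℝ) : ℝ := ∑ x, f x * g x

lemma swap_involutive (e : Fin n × Fin n) :
    Function.Involutive (fun x : Fin n → Fin 2 => fun i => x (Equiv.swap e.1 e.2 i)) := by
  intro x; funext i; simp

lemma sum_comp_swap (e : Fin n × Fin n) (f : (Fin n → Fin 2) → ℝ) :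
    ∑ x : Fin n → Fin 2, f (fun i => x (Equiv.swap e.1 e.2 i)) = ∑ x, f x :=
  Fintype.sum_bijective _ (swap_involutive e).bijective _ _ (fun _ => rfl)

lemma sum_class_comp_swap (e : Fin n × Fin n) (m : ℕ) (f : (Fin n → Fin 2) → ℝ) :
    ∑ x ∈ Finset.univ.filter (fun y : Fin n → Fin 2 => HWt y = m),
        f (fun i => x (Equiv.swap e.1 e.2 i))
      = ∑ x ∈ Finset.univ.filter (fun y : Fin n → Fin 2 => HWt y = m), f x := by
  apply Finset.sum_nbij' (fun x => fun i => x (Equiv.swap e.1 e.2 i))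
    (fun x => fun i => x (Equiv.swap e.1 e.2 i))
  · intro a ha
    simp only [Finset.mem_filter, Finset.mem_univ, true_and] at ha ⊢
    rw [hwt_swap]; exact ha
  · intro a ha
    simp only [Finset.mem_filter, Finset.mem_univ, true_and] at ha ⊢
    rw [hwt_swap]; exact ha
  · intro a _; exact swap_involutive e a
  · intro a _; exact swap_involutive e a
  · intro a _; rfl

lemma ip_self_nonneg (f : (Fin n → Fin 2) → ℝ) : 0 ≤ ip f f :=
  Finset.sum_nonneg (fun x _ => mul_self_nonneg _)

lemma ip_self_pos {f : (Fin n → Fin 2) → ℝ} (hf : f ≠ 0) : 0 < ip f f := by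
  rcases Function.ne_iff.mp hf with ⟨x, hx⟩
  exact Finset.sum_pos' (fun y _ => mul_self_nonneg _)
    ⟨x, Finset.mem_univ x, mul_self_pos.mpr (by simpa using hx)⟩

lemma dissipation (E : Finset (Fin n × Fin n)) (f : (Fin n → Fin 2) → ℝ) :
    ip f (Aop E f) = -(1/2) * ∑ x : Fin n → Fin 2, ∑ e ∈ E,
      (f (fun i => x (Equiv.swap e.1 e.2 i)) - f x)^2 := by
  have key : ∑ x : Fin n → Fin 2, ∑ e ∈ E,
      (f (fun i => x (Equiv.swap e.1 e.2 i)) - f x)^2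
      = ∑ x : Fin n → Fin 2, ∑ e ∈ E,
        ((f (fun i => x (Equiv.swap e.1 e.2 i)))^2 - f (fun i => x (Equiv.swap e.1 e.2 i)) * f x)
      + ∑ x : Fin n → Fin 2, ∑ e ∈ E,
        ((f x)^2 - f x * f (fun i => x (Equiv.swap e.1 e.2 i))) := by
    rw [← Finset.sum_add_distrib]
    apply Finset.sum_congr rfl; intro x _
    rw [← Finset.sum_add_distrib]
    apply Finset.sum_congr rfl; intro e _
    ring
  have swapped : ∑ x : Fin n → Fin 2, ∑ e ∈ E,
        ((f (fun i => x (Equiv.swap e.1 e.2 i)))^2 - f (fun i => x (Equiv.swap e.1 e.2 i)) * f x)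
      = ∑ x : Fin n → Fin 2, ∑ e ∈ E,
        ((f x)^2 - f x * f (fun i => x (Equiv.swap e.1 e.2 i))) := by
    rw [Finset.sum_comm, Finset.sum_comm (s := Finset.univ)]
    apply Finset.sum_congr rfl; intro e _
    rw [← sum_comp_swap e (fun x => (f x)^2 - f x * f (fun i => x (Equiv.swap e.1 e.2 i)))]
    apply Finset.sum_congr rfl; intro x _
    simp [Equiv.swap_apply_self]
  rw [key, swapped]
  unfold ip Aop
  rw [← Finset.sum_add_distrib]
  rw [Finset.mul_sum]
  apply Finset.sum_congr rfl; intro x _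
  rw [Finset.mul_sum, ← Finset.sum_add_distrib, Finset.mul_sum]
  apply Finset.sum_congr rfl; intro e _
  ring

lemma Aop_of_const_on_class (E : Finset (Fin n × Fin n))
    (f : (Fin n → Fin 2) → ℝ) (hf : ∀ x y, HWt x = HWt y → f x = f y) :
    Aop E f = 0 := by
  funext x
  unfold Aop
  apply Finset.sum_eq_zero
  intro e _
  rw [hf _ x (hwt_swap e x), sub_self]

lemma Aop_smul (E : Finset (Fin n × Fin n)) (a : ℝ) (f : (Fin n → Fin 2) → ℝ) :
    Aop E (a • f) = a • Aop E f := by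
  funext x
  unfold Aop
  simp only [Pi.smul_apply, smul_eq_mul, Finset.mul_sum]
  apply Finset.sum_congr rfl; intro e _; ring

lemma ip_smul_smul (a : ℝ) (f g : (Fin n → Fin 2) → ℝ) :
    ip (a • f) (a • g) = a^2 * ip f g := by
  unfold ip
  rw [Finset.mul_sum]
  apply Finset.sum_congr rfl; intro x _
  simp only [Pi.smul_apply, smul_eq_mul]; ring

lemma ip_self_nonpos_Aop (E : Finset (Fin n × Fin n)) (f : (Fin n → Fin 2) → ℝ) :
    ip f (Aop E f) ≤ 0 := by
  rw [dissipation]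
  have : (0:ℝ) ≤ ∑ x : Fin n → Fin 2, ∑ e ∈ E,
      (f (fun i => x (Equiv.swap e.1 e.2 i)) - f x)^2 :=
    Finset.sum_nonneg fun x _ => Finset.sum_nonneg fun e _ => sq_nonneg _
  nlinarith

lemma mem_K_of_ip_Aop_eq_zero (E : Finset (Fin n × Fin n))
    (hconn : (SimpleGraph.fromRel (fun a b => (a, b) ∈ E)).Connected)
    (f : (Fin n → Fin 2) → ℝ) (hzero : ip f (Aop E f) = 0) :
    ∀ x y, HWt x = HWt y → f x = f y := by
  have hsq : ∑ x : Fin n → Fin 2, ∑ e ∈ E,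
      (f (fun i => x (Equiv.swap e.1 e.2 i)) - f x)^2 = 0 := by
    rw [dissipation] at hzero; linarith
  have hterm : ∀ e ∈ E, ∀ x : Fin n → Fin 2,
      f (fun i => x (Equiv.swap e.1 e.2 i)) = f x := by
    intro e he x
    have h1 : ∀ x ∈ (Finset.univ : Finset (Fin n → Fin 2)), (0:ℝ) ≤ ∑ e ∈ E,
        (f (fun i => x (Equiv.swap e.1 e.2 i)) - f x)^2 :=
      fun x _ => Finset.sum_nonneg fun e _ => sq_nonneg _
    have h2 := (Finset.sum_eq_zero_iff_of_nonneg h1).mp hsq x (Finset.mem_univ x)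
    have h3 := (Finset.sum_eq_zero_iff_of_nonneg
      (fun (e : Fin n × Fin n) (_ : e ∈ E) => sq_nonneg
        (f (fun i => x (Equiv.swap e.1 e.2 i)) - f x))).mp h2 e he
    have h4 : f (fun i => x (Equiv.swap e.1 e.2 i)) - f x = 0 := by
      exact pow_eq_zero_iff (by norm_num) |>.mp h3
    linarith
  intro x y h
  exact const_on_class E hconn f hterm h

lemma hwt_le (x : Fin n → Fin 2) : HWt x ≤ n := by
  unfold HWt
  calc ∑ i, (x i).val ≤ ∑ _i : Fin n, 1 :=
        Finset.sum_le_sum (fun i _ => Nat.lt_succ_iff.mp (x i).isLt)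
    _ = n := by simp

lemma sum_class_of_const (f : (Fin n → Fin 2) → ℝ)
    (hf : ∀ x y, HWt x = HWt y → f x = f y) (x : Fin n → Fin 2) :
    ∑ y ∈ Finset.univ.filter (fun y : Fin n → Fin 2 => HWt y = HWt x), f y
      = (n.choose (HWt x) : ℝ) * f x := by
  rw [Finset.sum_congr rfl (fun y hy => hf y x
    (by simpa using (Finset.mem_filter.mp hy).2)), Finset.sum_const,
    card_hwt_class, nsmul_eq_mul]

lemma eq_zero_of_K_and_W (f : (Fin n → Fin 2) → ℝ)
    (hK : ∀ x y, HWt x = HWt y → f x = f y)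
    (hW : ∀ m : ℕ, ∑ y ∈ Finset.univ.filter (fun y : Fin n → Fin 2 => HWt y = m), f y = 0) :
    f = 0 := by
  funext x
  have h1 := sum_class_of_const f hK x
  rw [hW (HWt x)] at h1
  have hpos : (0:ℝ) < (n.choose (HWt x) : ℝ) := by
    exact_mod_cast Nat.choose_pos (hwt_le x)
  have := h1.symm
  simp only [Pi.zero_apply]
  rcases mul_eq_zero.mp this with h | h
  · exact absurd h (ne_of_gt hpos)
  · exact h

lemma spectral_gap (E : Finset (Fin n × Fin n))
    (hconn : (SimpleGraph.fromRel (fun a b => (a, b) ∈ E)).Connected) :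
    ∃ ε > (0:ℝ), ∀ f : (Fin n → Fin 2) → ℝ,
      (∀ m : ℕ, ∑ y ∈ Finset.univ.filter (fun y : Fin n → Fin 2 => HWt y = m), f y = 0) →
      ip f (Aop E f) ≤ -ε * ip f f := by
  set W : Set ((Fin n → Fin 2) → ℝ) := {f | ∀ m : ℕ,
    ∑ y ∈ Finset.univ.filter (fun y : Fin n → Fin 2 => HWt y = m), f y = 0} with hWdef
  by_cases htriv : ∀ f ∈ W, f = 0
  · refine ⟨1, one_pos, fun f hf => ?_⟩
    rw [htriv f hf]
    have h0 : Aop E (0 : (Fin n → Fin 2) → ℝ) = 0 :=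
      Aop_of_const_on_class E 0 (fun _ _ _ => rfl)
    rw [h0]
    unfold ip
    simp
  · push_neg at htriv
    obtain ⟨f₀, hf₀W, hf₀⟩ := htriv
    -- the compact sphere S
    set S : Set ((Fin n → Fin 2) → ℝ) := {f | f ∈ W ∧ ip f f = 1} with hSdef
    have hWclosed : IsClosed W := by
      have : W = ⋂ m : ℕ, {f : (Fin n → Fin 2) → ℝ |
          ∑ y ∈ Finset.univ.filter (fun y : Fin n → Fin 2 => HWt y = m), f y = 0} := by
        ext f; simp [hWdef, Set.mem_iInter]
      rw [this]
      exact isClosed_iInter fun m => isClosed_eq (by continuity) continuous_const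
    have hScl : IsClosed S := by
      apply hWclosed.inter
      exact isClosed_eq (by continuity) continuous_const
    have hSb : Bornology.IsBounded S := by
      apply Bornology.IsBounded.subset (Metric.isBounded_closedBall (x := (0 : (Fin n → Fin 2) → ℝ)) (r := 1))
      intro f hf
      rw [Metric.mem_closedBall, dist_zero_right]
      rw [pi_norm_le_iff_of_nonneg zero_le_one]
      intro x
      rw [Real.norm_eq_abs, abs_le_one_iff_mul_self_le_one]
      calc f x * f x ≤ ip f f :=
            Finset.single_le_sum (fun y _ => mul_self_nonneg (f y)) (Finset.mem_univ x)
        _ = 1 := hf.2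
    have hScompact : IsCompact S := Metric.isCompact_of_isClosed_isBounded hScl hSb
    have hSne : S.Nonempty := by
      set r := Real.sqrt (ip f₀ f₀) with hr
      have hrpos : 0 < r := Real.sqrt_pos.mpr (ip_self_pos hf₀)
      refine ⟨r⁻¹ • f₀, ?_, ?_⟩
      · intro m
        simp only [Pi.smul_apply, smul_eq_mul, ← Finset.mul_sum, hf₀W m, mul_zero]
      · have hr2 : r^2 = ip f₀ f₀ := Real.sq_sqrt (ip_self_nonneg f₀)
        rw [ip_smul_smul, inv_pow, hr2]
        exact inv_mul_cancel₀ (ne_of_gt (ip_self_pos hf₀))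
    -- minimise the quadratic form over S
    have hcont : Continuous (fun f : (Fin n → Fin 2) → ℝ => ip f (Aop E f)) := by
      unfold ip Aop
      continuity
    obtain ⟨g, hgS, hgmax⟩ := hScompact.exists_isMaxOn hSne hcont.continuousOn
    set ε := -(ip g (Aop E g)) with hε
    have hgne : g ≠ 0 := by
      intro h
      have h2 := hgS.2
      rw [h] at h2
      unfold ip at h2
      simp at h2
    have hεpos : 0 < ε := by
      rw [hε, neg_pos]
      rcases lt_or_eq_of_le (ip_self_nonpos_Aop E g) with h | h
      · exact h
      · exfalso
        apply hgne
        exact eq_zero_of_K_and_W g (mem_K_of_ip_Aop_eq_zero E hconn g h) hgS.1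
    refine ⟨ε, hεpos, fun f hfW => ?_⟩
    by_cases hf : f = 0
    · rw [hf]
      have h0 : Aop E (0 : (Fin n → Fin 2) → ℝ) = 0 :=
        Aop_of_const_on_class E 0 (fun _ _ _ => rfl)
      rw [h0]
      unfold ip; simp
    · set r := Real.sqrt (ip f f) with hr
      have hipf : 0 < ip f f := ip_self_pos hf
      have hrpos : 0 < r := Real.sqrt_pos.mpr hipf
      have hmem : r⁻¹ • f ∈ S := by
        constructor
        · intro m
          simp only [Pi.smul_apply, smul_eq_mul, ← Finset.mul_sum, hfW m, mul_zero]
        · have hr2 : r^2 = ip f f := Real.sq_sqrt (ip_self_nonneg f)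
          rw [ip_smul_smul, inv_pow, hr2]
          exact inv_mul_cancel₀ (ne_of_gt hipf)
      have hle := hgmax hmem
      have hr2 : r^2 = ip f f := Real.sq_sqrt (ip_self_nonneg f)
      have hcompute : ip (r⁻¹ • f) (Aop E (r⁻¹ • f)) = (ip f f)⁻¹ * ip f (Aop E f) := by
        rw [Aop_smul, ip_smul_smul, inv_pow, hr2]
      have hkey : (ip f f)⁻¹ * ip f (Aop E f) ≤ -ε := by
        rw [← hcompute]
        simpa [hε] using hle
      have h5 : ip f f * ((ip f f)⁻¹ * ip f (Aop E f)) ≤ ip f f * (-ε) :=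
        mul_le_mul_of_nonneg_left hkey hipf.le
      rw [← mul_assoc, mul_inv_cancel₀ (ne_of_gt hipf), one_mul] at h5
      linarith

open Filter

/-- For the diagonal dynamics `d/dt c_x = Σ_{{j,k}∈E}(c_{u_{jk}(x)} − c_x)` with the
transpositions in `E` forming a connected graph on `{1,…,n}`, each entry of Hamming
weight `k` converges to the average of the initial entries of weight `k`. -/
theorem diagonal_entries_converge_to_weight_average {n : ℕ}
    (E : Finset (Fin n × Fin n))
    (hconn : (SimpleGraph.fromRel (fun a b => (a, b) ∈ E)).Connected)
    (c : ℝ → (Fin n → Fin 2) → ℝ)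
    (hc : ∀ x t, HasDerivAt (fun s => c s x)
      (∑ e ∈ E, (c t (fun i => x (Equiv.swap e.1 e.2 i)) - c t x)) t) :
    ∀ x : Fin n → Fin 2,
      Tendsto (fun t => c t x) atTop
        (nhds ((∑ y ∈ Finset.univ.filter
            (fun y : Fin n → Fin 2 => ∑ i, (y i).val = ∑ i, (x i).val), c 0 y)
          / (n.choose (∑ i, (x i).val) : ℝ))) := by
  intro x
  obtain ⟨ε, hεpos, hgap⟩ := spectral_gap E hconn
  set p : (Fin n → Fin 2) → ℝ := fun y =>
    (∑ z ∈ Finset.univ.filter (fun z : Fin n → Fin 2 => HWt z = HWt y), c 0 z)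
      / (n.choose (HWt y) : ℝ) with hpdef
  have hpK : ∀ a b, HWt a = HWt b → p a = p b := by
    intro a b h
    simp only [hpdef, h]
  have hAp : Aop E p = 0 := Aop_of_const_on_class E p hpK
  have hpswap : ∀ (e : Fin n × Fin n) (y : Fin n → Fin 2),
      p (fun i => y (Equiv.swap e.1 e.2 i)) = p y :=
    fun e y => hpK _ _ (hwt_swap e y)
  set w : ℝ → (Fin n → Fin 2) → ℝ := fun t y => c t y - p y with hwdef
  -- conservation of class sums
  have hconsv : ∀ (m : ℕ) (t : ℝ),
      ∑ y ∈ Finset.univ.filter (fun y : Fin n → Fin 2 => HWt y = m), c t y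
        = ∑ y ∈ Finset.univ.filter (fun y : Fin n → Fin 2 => HWt y = m), c 0 y := by
    intro m
    set Cm := Finset.univ.filter (fun y : Fin n → Fin 2 => HWt y = m) with hCm
    have hderiv : ∀ t, HasDerivAt (fun s => ∑ y ∈ Cm, c s y) 0 t := by
      intro t
      have h1 : HasDerivAt (fun s => ∑ y ∈ Cm, c s y)
          (∑ y ∈ Cm, ∑ e ∈ E, (c t (fun i => y (Equiv.swap e.1 e.2 i)) - c t y)) t :=
        HasDerivAt.fun_sum (fun y _ => hc y t)
      have h2 : ∑ y ∈ Cm, ∑ e ∈ E, (c t (fun i => y (Equiv.swap e.1 e.2 i)) - c t y) = 0 := by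
        rw [Finset.sum_comm]
        apply Finset.sum_eq_zero
        intro e _
        rw [Finset.sum_sub_distrib, sum_class_comp_swap e m (c t), sub_self]
      rwa [h2] at h1
    intro t
    have hdiff : Differentiable ℝ (fun s => ∑ y ∈ Cm, c s y) :=
      fun s => (hderiv s).differentiableAt
    have hzero : ∀ s, deriv (fun s => ∑ y ∈ Cm, c s y) s = 0 :=
      fun s => (hderiv s).deriv
    exact is_const_of_deriv_eq_zero hdiff hzero t 0
  -- class sums of p
  have hsump : ∀ m : ℕ,
      ∑ y ∈ Finset.univ.filter (fun y : Fin n → Fin 2 => HWt y = m), p y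
        = ∑ y ∈ Finset.univ.filter (fun y : Fin n → Fin 2 => HWt y = m), c 0 y := by
    intro m
    rcases (Finset.univ.filter (fun y : Fin n → Fin 2 => HWt y = m)).eq_empty_or_nonempty with
      h | ⟨y₀, hy₀⟩
    · rw [h]; simp
    · have hy₀m : HWt y₀ = m := by simpa using (Finset.mem_filter.mp hy₀).2
      have h1 := sum_class_of_const p hpK y₀
      rw [hy₀m] at h1
      rw [h1, hpdef]
      simp only [hy₀m]
      rw [mul_div_cancel₀]
      have : m ≤ n := hy₀m ▸ hwt_le y₀
      exact_mod_cast Nat.choose_pos this |>.ne'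
  -- w stays orthogonal
  have hWmem : ∀ t, ∀ m : ℕ,
      ∑ y ∈ Finset.univ.filter (fun y : Fin n → Fin 2 => HWt y = m), w t y = 0 := by
    intro t m
    rw [hwdef]
    simp only
    rw [Finset.sum_sub_distrib, hconsv m t, hsump m, sub_self]
  -- derivative of V
  set V : ℝ → ℝ := fun t => ∑ y : Fin n → Fin 2, (w t y)^2 with hVdef
  have hVip : ∀ t, V t = ip (w t) (w t) := by
    intro t; unfold ip; apply Finset.sum_congr rfl; intro y _; rw [sq]
  have hAw : ∀ t (y : Fin n → Fin 2),
      ∑ e ∈ E, (c t (fun i => y (Equiv.swap e.1 e.2 i)) - c t y) = Aop E (w t) y := by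
    intro t y
    unfold Aop
    apply Finset.sum_congr rfl
    intro e _
    rw [hwdef]
    simp only
    rw [hpswap e y]
    ring
  have hVderiv : ∀ t, HasDerivAt V (2 * ip (w t) (Aop E (w t))) t := by
    intro t
    have h1 : ∀ y ∈ (Finset.univ : Finset (Fin n → Fin 2)),
        HasDerivAt (fun s => (w s y)^2)
          (2 * (w t y)^1 * (Aop E (w t) y)) t := by
      intro y _
      have h2 : HasDerivAt (fun s => w s y) (Aop E (w t) y) t := by
        rw [← hAw t y]
        exact (hc y t).sub_const (p y)
      have := h2.pow 2
      norm_num at this ⊢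
      exact this
    have h3 := HasDerivAt.fun_sum h1
    have h4 : ∑ y : Fin n → Fin 2, 2 * (w t y)^1 * (Aop E (w t) y)
        = 2 * ip (w t) (Aop E (w t)) := by
      unfold ip
      rw [Finset.mul_sum]
      apply Finset.sum_congr rfl; intro y _; ring
    rwa [h4] at h3
  -- Gronwall
  have hVnonneg : ∀ t, 0 ≤ V t := fun t => Finset.sum_nonneg fun y _ => sq_nonneg _
  have hVdecay : ∀ t, 2 * ip (w t) (Aop E (w t)) ≤ -(2*ε) * V t := by
    intro t
    have := hgap (w t) (hWmem t)
    rw [hVip t]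
    linarith
  set g : ℝ → ℝ := fun t => V t * Real.exp (2*ε*t) with hgdef
  have hgderiv : ∀ t, HasDerivAt g
      (2 * ip (w t) (Aop E (w t)) * Real.exp (2*ε*t) + V t * (Real.exp (2*ε*t) * (2*ε))) t := by
    intro t
    have hexp : HasDerivAt (fun t : ℝ => Real.exp (2*ε*t)) (Real.exp (2*ε*t) * (2*ε)) t := by
      have h1 : HasDerivAt (fun t : ℝ => 2*ε*t) (2*ε) t := by
        simpa using (hasDerivAt_id t).const_mul (2*ε)
      exact h1.exp
    exact (hVderiv t).mul hexp
  have hgdiff : Differentiable ℝ g := fun t => (hgderiv t).differentiableAt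
  have hgd0 : ∀ t, deriv g t ≤ 0 := by
    intro t
    rw [(hgderiv t).deriv]
    have he : 0 < Real.exp (2*ε*t) := Real.exp_pos _
    have h1 := hVdecay t
    nlinarith [hVnonneg t]
  have hganti : Antitone g := antitone_of_deriv_nonpos hgdiff hgd0
  have hbound : ∀ t : ℝ, 0 ≤ t → V t ≤ V 0 * Real.exp (-(2*ε)*t) := by
    intro t ht
    have h1 : g t ≤ g 0 := hganti ht
    rw [hgdef] at h1
    simp only [mul_zero, Real.exp_zero, mul_one] at h1
    have h2 : V t = (V t * Real.exp (2*ε*t)) * Real.exp (-(2*ε)*t) := by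
      rw [mul_assoc, ← Real.exp_add, show 2*ε*t + -(2*ε)*t = 0 by ring,
        Real.exp_zero, mul_one]
    rw [h2]
    exact mul_le_mul_of_nonneg_right h1 (Real.exp_nonneg _)
  have hbto : Tendsto (fun t => V 0 * Real.exp (-(2*ε)*t)) atTop (nhds 0) := by
    have h1 : Tendsto (fun t : ℝ => -(2*ε)*t) atTop atBot :=
      (tendsto_const_mul_atBot_of_neg (by linarith)).mpr tendsto_id
    have h2 := (Real.tendsto_exp_atBot.comp h1).const_mul (V 0)
    simpa using h2
  have hVto : Tendsto V atTop (nhds 0) := by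
    apply squeeze_zero' (Eventually.of_forall hVnonneg) ?_ hbto
    filter_upwards [eventually_ge_atTop (0:ℝ)] with t ht
    exact hbound t ht
  have hwsq : Tendsto (fun t => (w t x)^2) atTop (nhds 0) := by
    apply squeeze_zero (fun t => sq_nonneg _) ?_ hVto
    intro t
    exact Finset.single_le_sum (fun y _ => sq_nonneg (w t y)) (Finset.mem_univ x)
  have hwabs : Tendsto (fun t => |w t x|) atTop (nhds 0) := by
    have := hwsq.sqrt
    simpa [Real.sqrt_sq_eq_abs] using this
  have hwto : Tendsto (fun t => w t x) atTop (nhds 0) :=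
    (tendsto_zero_iff_abs_tendsto_zero _).mpr hwabs
  have hfinal : Tendsto (fun t => c t x) atTop (nhds (p x)) := by
    have h1 := hwto.add_const (p x)
    rw [zero_add] at h1
    have h2 : (fun t => w t x + p x) = fun t => c t x := by
      funext t; rw [hwdef]; simp
    rwa [h2] at h1
  exact hfinal
end

section
/- Consider the linear ODE dX_i/dt = i θ_i X_i + Σ_{j:{i,j}∈E}(X_j − X_i) over a finite connected undirected graph with at least two nodes, where the θ_i are not all equal. If the solution converges to zero, the convergence is at an exponential rate: all eigenvalues of the system matrix M, with M_{ii} = iθ_i − deg(i) and M_{ij} = 1 for {i,j} ∈ E (0 otherwise), have strictly negative real part. -/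
open Finset

/-- For a connected graph on `N ≥ 2` nodes and frequencies `θ_i` not all equal, every
eigenvalue of the system matrix `M` (with `M_{ii} = iθ_i − deg(i)`, `M_{ij} = 1` on edges)
has strictly negative real part, giving exponential convergence to zero. -/
theorem system_matrix_spectrum_negative {N : ℕ} (hN : 2 ≤ N)
    (G : SimpleGraph (Fin N)) [DecidableRel G.Adj] (hG : G.Connected)
    (θ : Fin N → ℝ) (hθ : ∃ i j, θ i ≠ θ j)
    (M : Matrix (Fin N) (Fin N) ℂ)
    (hM : M = Matrix.of fun i j =>
      if i = j then Complex.I * (θ i : ℂ) - (G.degree i : ℂ)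
      else if G.Adj i j then 1 else 0) :
    ∀ μ ∈ spectrum ℂ M, μ.re < 0 := by
  intro μ hμ
  -- extract an eigenvector
  have h' : μ ∈ spectrum ℂ (Matrix.toLinAlgEquiv' M) := by
    rwa [AlgEquiv.spectrum_eq]
  obtain ⟨v, hv⟩ := ((Module.End.hasEigenvalue_iff_mem_spectrum).2 h').exists_hasEigenvector
  have hvne : v ≠ 0 := hv.right
  have heig : M.mulVec v = μ • v := by
    have h2 := hv.apply_eq_smul
    rwa [Matrix.toLinAlgEquiv'_apply] at h2
  set c : Fin N → ℂ := fun i => (starRingEnd ℂ) (v i) with hc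
  -- degree as a sum
  have hdeg : ∀ i, (G.degree i : ℂ) * v i = ∑ j, if G.Adj i j then v i else 0 := by
    intro i
    have : ∑ j, (if G.Adj i j then v i else 0) = (G.neighborFinset i).card • v i := by
      rw [SimpleGraph.neighborFinset_eq_filter, ← Finset.sum_filter, Finset.sum_const]
    rw [this, SimpleGraph.degree, nsmul_eq_mul]
  -- row expansion
  have hrow : ∀ i, (M.mulVec v) i
      = Complex.I * θ i * v i + ∑ j, (if G.Adj i j then v j - v i else 0) := by
    intro i
    have h1 : (M.mulVec v) i = ∑ j, M i j * v j := rfl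
    have h2 : ∀ j, M i j * v j
        = (if i = j then (Complex.I * θ i - G.degree i) * v j else 0)
          + (if G.Adj i j then v j else 0) := by
      intro j
      by_cases hij : i = j
      · subst hij; simp [hM, G.irrefl]
      · by_cases ha : G.Adj i j <;> simp [hM, hij, ha]
    rw [h1, Finset.sum_congr rfl fun j _ => h2 j, Finset.sum_add_distrib,
      Finset.sum_ite_eq univ i (fun j => (Complex.I * θ i - G.degree i) * v j)]
    simp only [Finset.mem_univ, if_true]
    rw [sub_mul, hdeg i]
    have h4 : (∑ j, if G.Adj i j then v j - v i else 0)
        = (∑ j, if G.Adj i j then v j else 0) - ∑ j, if G.Adj i j then v i else 0 := by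
      rw [← Finset.sum_sub_distrib]
      exact Finset.sum_congr rfl fun j _ => by by_cases ha : G.Adj i j <;> simp [ha]
    rw [h4]; ring
  -- the scalar S
  set S : ℂ := ∑ i, c i * (M.mulVec v) i with hS
  set r : ℝ := ∑ i, Complex.normSq (v i) with hr
  have hSr : S = μ * (r : ℝ) := by
    rw [hS, heig]
    push_cast [hr]
    rw [Finset.mul_sum]
    refine Finset.sum_congr rfl fun i _ => ?_
    rw [Pi.smul_apply, smul_eq_mul, hc]
    rw [Complex.normSq_eq_conj_mul_self]
    ring
  -- Z: the off-diagonal part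
  set Z : ℂ := ∑ i, ∑ j, (if G.Adj i j then c i * (v j - v i) else 0) with hZ
  have hSexp : S = (∑ i, Complex.I * θ i * Complex.normSq (v i)) + Z := by
    rw [hS, hZ, ← Finset.sum_add_distrib]
    refine Finset.sum_congr rfl fun i _ => ?_
    rw [hrow i, mul_add, Finset.mul_sum]
    congr 1
    · rw [hc, Complex.normSq_eq_conj_mul_self]; ring
    · refine Finset.sum_congr rfl fun j _ => ?_
      by_cases ha : G.Adj i j <;> simp [ha]
  set W : ℂ := ∑ i, ∑ j, (if G.Adj i j then (Complex.normSq (v i - v j) : ℂ) else 0) with hW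
  have hZZ : Z + Z = -W := by
    have hswap : Z = ∑ i, ∑ j, (if G.Adj i j then c j * (v i - v j) else 0) := by
      rw [hZ, Finset.sum_comm]
      refine Finset.sum_congr rfl fun i _ => Finset.sum_congr rfl fun j _ => ?_
      by_cases ha : G.Adj i j
      · rw [if_pos ha.symm, if_pos ha]
      · rw [if_neg (fun h => ha h.symm), if_neg ha]
    nth_rewrite 2 [hswap]
    rw [hZ]
    rw [hW, ← Finset.sum_add_distrib, ← Finset.sum_neg_distrib]
    refine Finset.sum_congr rfl fun i _ => ?_
    rw [← Finset.sum_add_distrib, ← Finset.sum_neg_distrib]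
    refine Finset.sum_congr rfl fun j _ => ?_
    by_cases ha : G.Adj i j
    · simp only [ha, if_true]
      rw [hc, Complex.normSq_eq_conj_mul_self, map_sub]
      ring
    · simp [ha]
  -- real parts
  have hWre : W.re = ∑ i, ∑ j, (if G.Adj i j then Complex.normSq (v i - v j) else 0) := by
    rw [hW, Complex.re_sum]
    refine Finset.sum_congr rfl fun i _ => ?_
    rw [Complex.re_sum]
    refine Finset.sum_congr rfl fun j _ => ?_
    by_cases ha : G.Adj i j <;> simp [ha]
  have hWnonneg : 0 ≤ W.re := by
    rw [hWre]
    refine Finset.sum_nonneg fun i _ => Finset.sum_nonneg fun j _ => ?_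
    by_cases ha : G.Adj i j <;> simp [ha, Complex.normSq_nonneg]
  have hSre : S.re = -(W.re) / 2 := by
    have h2S : S + S = (∑ i, Complex.I * θ i * Complex.normSq (v i))
        + (∑ i, Complex.I * θ i * Complex.normSq (v i)) + (Z + Z) := by
      rw [hSexp]; ring
    have hire : ((∑ i, Complex.I * θ i * Complex.normSq (v i))).re = 0 := by
      rw [Complex.re_sum]
      refine Finset.sum_eq_zero fun i _ => ?_
      simp [Complex.mul_re]
    have := congrArg Complex.re h2S
    rw [hZZ] at this
    simp only [Complex.add_re, Complex.neg_re, hire] at this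
    linarith
  have hrpos : 0 < r := by
    rw [hr]
    obtain ⟨i0, hi0⟩ := Function.ne_iff.mp hvne
    refine Finset.sum_pos' (fun i _ => Complex.normSq_nonneg _) ⟨i0, Finset.mem_univ _, ?_⟩
    simpa [Complex.normSq_pos] using hi0
  have hmure : μ.re * r = -(W.re) / 2 := by
    have h5 := congrArg Complex.re hSr
    rw [hSre, Complex.mul_re, Complex.ofReal_re, Complex.ofReal_im, mul_zero, sub_zero] at h5
    linarith
  have hle : μ.re ≤ 0 := by nlinarith
  rcases lt_or_eq_of_le hle with h | h
  · exact h
  · -- μ.re = 0 : derive contradiction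
    exfalso
    have hW0 : W.re = 0 := by nlinarith
    have hedge : ∀ i j, G.Adj i j → v i = v j := by
      intro i j ha
      have hnn : ∀ i ∈ (univ : Finset (Fin N)),
          0 ≤ ∑ j, (if G.Adj i j then Complex.normSq (v i - v j) else 0) :=
        fun i _ => Finset.sum_nonneg fun j _ => by
          by_cases ha : G.Adj i j <;> simp [ha, Complex.normSq_nonneg]
      rw [hWre] at hW0
      have h1 := (Finset.sum_eq_zero_iff_of_nonneg hnn).1 hW0 i (Finset.mem_univ _)
      have h2 := (Finset.sum_eq_zero_iff_of_nonneg (fun j _ => by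
          by_cases ha : G.Adj i j <;> simp [ha, Complex.normSq_nonneg])).1 h1 j (Finset.mem_univ _)
      rw [if_pos ha] at h2
      exact sub_eq_zero.mp (Complex.normSq_eq_zero.mp h2)
    have hconst : ∀ i j, v i = v j := by
      have hwalk : ∀ {a b : Fin N} (p : G.Walk a b), v a = v b := by
        intro a b p
        induction p with
        | nil => rfl
        | cons h _ ih => exact (hedge _ _ h).trans ih
      intro i j
      obtain ⟨p⟩ := hG.preconnected i j
      exact hwalk p
    obtain ⟨i0, hi0⟩ := Function.ne_iff.mp hvne
    have hvall : ∀ i, v i ≠ 0 := fun i => (hconst i i0) ▸ hi0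
    have hmu : ∀ i, μ = Complex.I * θ i := by
      intro i
      have h1 : (M.mulVec v) i = μ * v i := by rw [heig]; rfl
      rw [hrow i] at h1
      have h2 : (∑ j, (if G.Adj i j then v j - v i else 0)) = 0 := by
        refine Finset.sum_eq_zero fun j _ => ?_
        by_cases ha : G.Adj i j
        · simp [ha, (hconst j i).symm ▸ sub_self (v i), hconst i j]
        · simp [ha]
      rw [h2, add_zero] at h1
      exact mul_right_cancel₀ (hvall i) h1.symm
    obtain ⟨i, j, hij⟩ := hθ
    apply hij
    have h1 := congrArg Complex.im (hmu i)
    have h2 := congrArg Complex.im (hmu j)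
    simp [Complex.mul_im] at h1 h2
    linarith
end

section
/- Let L be the Laplacian of a connected undirected graph on N ≥ 2 vertices, Θ = diag(θ_1,…,θ_N) with the θ_i real and not all equal. Then the matrix M = iΘ − L is invertible; in particular 0 is not an eigenvalue of M. -/
open Matrix

lemma lapMatrix_complex_map {N : ℕ} (G : SimpleGraph (Fin N)) [DecidableRel G.Adj] :
    G.lapMatrix ℂ = (G.lapMatrix ℝ).map (Complex.ofReal) := by
  ext i j
  simp [SimpleGraph.lapMatrix, SimpleGraph.degMatrix, Matrix.diagonal, Matrix.map_apply]
  split_ifs <;> push_cast <;> ring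

/-- If the graph is connected on `N ≥ 2` vertices and the real numbers `θ_i` are not all
equal, then `M = iΘ − L` is invertible; in particular `0` is not an eigenvalue of `M`. -/
theorem iTheta_sub_laplacian_invertible {N : ℕ} (hN : 2 ≤ N)
    (G : SimpleGraph (Fin N)) [DecidableRel G.Adj] (hG : G.Connected)
    (θ : Fin N → ℝ) (hθ : ∃ i j, θ i ≠ θ j)
    (M : Matrix (Fin N) (Fin N) ℂ)
    (hM : M = Complex.I • Matrix.diagonal (fun i => (θ i : ℂ)) - G.lapMatrix ℂ) :
    IsUnit M ∧ (0 : ℂ) ∉ spectrum ℂ M := by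
  have key : ∀ v : Fin N → ℂ, M *ᵥ v = 0 → v = 0 := by
    intro v hv
    set x : Fin N → ℝ := fun i => (v i).re with hxdef
    set y : Fin N → ℝ := fun i => (v i).im with hydef
    have hcomp : ∀ i, Complex.I * (θ i : ℂ) * v i = (G.lapMatrix ℂ *ᵥ v) i := by
      intro i
      have := congrFun hv i
      rw [hM] at this
      simp [Matrix.sub_mulVec, Matrix.smul_mulVec, Matrix.mulVec_diagonal,
        sub_eq_zero] at this
      rw [← this]; ring
    have hre : ∀ i, (G.lapMatrix ℝ *ᵥ x) i = -(θ i * y i) := by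
      intro i
      have h := congrArg Complex.re (hcomp i).symm
      simpa [lapMatrix_complex_map, Matrix.mulVec, dotProduct, Complex.re_sum,
        Complex.mul_re, hxdef, hydef] using h
    have him : ∀ i, (G.lapMatrix ℝ *ᵥ y) i = θ i * x i := by
      intro i
      have h := congrArg Complex.im (hcomp i).symm
      simpa [lapMatrix_complex_map, Matrix.mulVec, dotProduct, Complex.im_sum,
        Complex.mul_im, hxdef, hydef] using h
    have hqx : x ⬝ᵥ (G.lapMatrix ℝ *ᵥ x) = -∑ i, θ i * x i * y i := by
      simp only [dotProduct]
      rw [← Finset.sum_neg_distrib]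
      exact Finset.sum_congr rfl fun i _ => by rw [hre i]; ring
    have hqy : y ⬝ᵥ (G.lapMatrix ℝ *ᵥ y) = ∑ i, θ i * x i * y i := by
      simp only [dotProduct]
      exact Finset.sum_congr rfl fun i _ => by rw [him i]; ring
    have hx0 : x ⬝ᵥ (G.lapMatrix ℝ *ᵥ x) ≥ 0 := by
      have := (Matrix.posSemidef_iff_dotProduct_mulVec.mp (SimpleGraph.posSemidef_lapMatrix ℝ G)).2 x
      simpa using this
    have hy0 : y ⬝ᵥ (G.lapMatrix ℝ *ᵥ y) ≥ 0 := by
      have := (Matrix.posSemidef_iff_dotProduct_mulVec.mp (SimpleGraph.posSemidef_lapMatrix ℝ G)).2 y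
      simpa using this
    have hsum : x ⬝ᵥ (G.lapMatrix ℝ *ᵥ x) + y ⬝ᵥ (G.lapMatrix ℝ *ᵥ y) = 0 := by
      rw [hqx, hqy]; ring
    have hqx0 : x ⬝ᵥ (G.lapMatrix ℝ *ᵥ x) = 0 := by linarith
    have hqy0 : y ⬝ᵥ (G.lapMatrix ℝ *ᵥ y) = 0 := by linarith
    have hxconst : ∀ i j, x i = x j := by
      intro i j
      have := (SimpleGraph.lapMatrix_toLinearMap₂'_apply'_eq_zero_iff_forall_reachable G x).mp
        (by rwa [Matrix.toLinearMap₂'_apply'])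
      exact this i j (hG.preconnected i j)
    have hyconst : ∀ i j, y i = y j := by
      intro i j
      have := (SimpleGraph.lapMatrix_toLinearMap₂'_apply'_eq_zero_iff_forall_reachable G y).mp
        (by rwa [Matrix.toLinearMap₂'_apply'])
      exact this i j (hG.preconnected i j)
    have hLx : G.lapMatrix ℝ *ᵥ x = 0 := by
      have := (SimpleGraph.lapMatrix_mulVec_eq_zero_iff_forall_reachable G (x := x)).mpr
        (fun i j _ => hxconst i j)
      exact this
    have hLy : G.lapMatrix ℝ *ᵥ y = 0 := by
      have := (SimpleGraph.lapMatrix_mulVec_eq_zero_iff_forall_reachable G (x := y)).mpr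
        (fun i j _ => hyconst i j)
      exact this
    have hty : ∀ i, θ i * y i = 0 := by
      intro i
      have := hre i
      rw [hLx] at this
      simpa using this.symm
    have htx : ∀ i, θ i * x i = 0 := by
      intro i
      have := him i
      rw [hLy] at this
      simpa using this.symm
    obtain ⟨i, j, hij⟩ := hθ
    have hk : ∃ k, θ k ≠ 0 := by
      by_contra h
      push_neg at h
      exact hij (by rw [h i, h j])
    obtain ⟨k, hk⟩ := hk
    have hxk : x k = 0 := by
      have := htx k
      rcases mul_eq_zero.mp this with h | h
      · exact absurd h hk
      · exact h
    have hyk : y k = 0 := by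
      have := hty k
      rcases mul_eq_zero.mp this with h | h
      · exact absurd h hk
      · exact h
    funext l
    have hxl : x l = 0 := (hxconst l k).trans hxk
    have hyl : y l = 0 := (hyconst l k).trans hyk
    exact Complex.ext (by simpa [hxdef] using hxl) (by simpa [hydef] using hyl)
  have hdet : M.det ≠ 0 := by
    intro h
    obtain ⟨v, hv0, hv⟩ := (Matrix.exists_mulVec_eq_zero_iff).mpr h
    exact hv0 (key v hv)
  have hunit : IsUnit M := by
    rw [Matrix.isUnit_iff_isUnit_det]
    exact isUnit_iff_ne_zero.mpr hdet
  exact ⟨hunit, fun h => (spectrum.zero_mem_iff ℂ).mp h hunit⟩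
end
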